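/- arXiv:2512.05510 — 7 statements merged into one kernel-verified Lean document; each statement's English description precedes it below -/
import Mathlib

section
/- For integers m ≥ λ ≥ 0 with m - λ even, the number of affine Temperley–Lieb (λ,m)-diagrams with λ through lines and no non-contractible loops equals the binomial coefficient C(m, (m-λ)/2). -/
/-- `x` lies strictly inside the clockwise (cyclic) arc from `i` to `j` on `m` points
arranged on a circle. -/
def inOpenArc {m : ℕ} (i j x : Fin m) : Prop :=
  0 < (x - i).val ∧ (x - i).val < (j - i).val

/-- `x` lies on the closed clockwise arc from `i` to `j`. -/
def inClosedArc {m : ℕ} (i j x : Fin m) : Prop :=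
  x = i ∨ x = j ∨ inOpenArc i j x

/-- An affine (annular) Temperley--Lieb top `(λ,m)`-diagram with `λ` through lines and no
non-contractible loops: `λ` marked through points on a circle of `m` points, and a system
of cups, each cup being recorded together with the boundary arc it bounds (an ordered pair
`(i,j)` denoting the clockwise arc from `i` to `j`).  Cups have pairwise distinct
endpoints, every point is either a through point or a cup endpoint, no through point lies
inside a cup's arc, and the arcs of any two cups are either nested or disjoint (annular
planarity). -/
structure AffineTLTop (m lam : ℕ) where
  through : Finset (Fin m)
  card_through : through.card = lam
  arcs : Finset (Fin m × Fin m)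
  arc_ne : ∀ a ∈ arcs, a.1 ≠ a.2
  endpoints_disjoint : ∀ a ∈ arcs, ∀ b ∈ arcs, a ≠ b →
    a.1 ≠ b.1 ∧ a.1 ≠ b.2 ∧ a.2 ≠ b.1 ∧ a.2 ≠ b.2
  through_iff : ∀ x : Fin m, x ∈ through ↔ ∀ a ∈ arcs, x ≠ a.1 ∧ x ≠ a.2
  through_outside : ∀ x ∈ through, ∀ a ∈ arcs, ¬inOpenArc a.1 a.2 x
  planar : ∀ a ∈ arcs, ∀ b ∈ arcs, a ≠ b →
    (∀ x : Fin m, inClosedArc a.1 a.2 x → inOpenArc b.1 b.2 x) ∨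
    (∀ x : Fin m, inClosedArc b.1 b.2 x → inOpenArc a.1 a.2 x) ∨
    (∀ x : Fin m, ¬(inClosedArc a.1 a.2 x ∧ inClosedArc b.1 b.2 x))

/-! A diagram is determined by its set `S` of openers (the clockwise-first endpoints of its
cups), and `S` can be any subset of size `(m - λ)/2`. Walking clockwise from an opener `i`,
counting `+1` at openers and `-1` at all other points, the partner of `i` is the first point
where the count reaches `-1`: inside a cup every point is an endpoint of a nested cup, so the
count stays nonnegative there and returns to `0` just before the end. Conversely, when
`2 * #S ≤ m` this first-passage rule pairs the openers with distinct non-openers, and the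
resulting cups are nested or disjoint and enclose no free point. -/

open Finset Fin.NatCast

lemma exists_first_hit {g : ℕ → ℤ} (hstep : ∀ t, g t - 1 ≤ g (t + 1)) {a b : ℕ}
    {c : ℤ} (hab : a ≤ b) (ha : c < g a) (hb : g b ≤ c) :
    ∃ u, a < u ∧ u ≤ b ∧ g u = c ∧ ∀ v, a ≤ v → v < u → c < g v := by
  classical
  have hab' : a < b := lt_of_le_of_ne hab (by rintro rfl; omega)
  have hex : ∃ u, a < u ∧ g u ≤ c := ⟨b, hab', hb⟩
  obtain ⟨hau, hu⟩ := Nat.find_spec hex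
  have hbefore : ∀ v, a ≤ v → v < Nat.find hex → c < g v := fun v hav hv => by
    rcases hav.eq_or_lt with rfl | hav
    · exact ha
    · exact not_le.mp fun h => Nat.find_min hex hv ⟨hav, h⟩
  refine ⟨Nat.find hex, hau, Nat.find_min' hex ⟨hab', hb⟩, ?_, hbefore⟩
  have hprev := hbefore (Nat.find hex - 1) (by omega) (by omega)
  have hlast := hstep (Nat.find hex - 1)
  rw [Nat.sub_add_cancel (by omega)] at hlast
  omega

-- `(x - i).val` is the clockwise distance from `i` to `x` on the circle `Fin m`.
namespace Fin

variable {m : ℕ} [NeZero m]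

lemma val_add_natCast_sub (i : Fin m) {s : ℕ} (hs : s < m) : (i + s - i).val = s := by
  rw [add_sub_cancel_left, val_natCast, Nat.mod_eq_of_lt hs]

lemma add_natCast_val_sub (i x : Fin m) : i + ((x - i).val : Fin m) = x := by
  rw [cast_val_eq_self, add_sub_cancel]

lemma val_sub_eq_zero_iff {i x : Fin m} : (x - i).val = 0 ↔ x = i := by
  rw [val_eq_zero_iff, sub_eq_zero]

lemma val_sub_add_val_sub (i j x : Fin m) :
    (x - i).val = (j - i).val + (x - j).val ∨ (x - i).val + m = (j - i).val + (x - j).val := by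
  rw [show x - i = (j - i) + (x - j) by abel, val_add_eq_ite]
  split_ifs <;> omega

lemma val_sub_add_val_sub_comm {i j : Fin m} (hne : i ≠ j) :
    (j - i).val + (i - j).val = m := by
  have h0 : (j - i).val ≠ 0 := fun h => hne (val_sub_eq_zero_iff.mp h).symm
  rcases val_sub_add_val_sub i j i with h | h <;> simp at h <;> omega

end Fin

lemma inClosedArc_iff {m : ℕ} [NeZero m] (i j x : Fin m) :
    inClosedArc i j x ↔ (x - i).val ≤ (j - i).val := by
  unfold inClosedArc inOpenArc
  constructor
  · rintro (rfl | rfl | h) <;> simp_all [le_of_lt]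
  · intro h
    rcases Nat.eq_zero_or_pos (x - i).val with h0 | h0
    · exact Or.inl (Fin.val_sub_eq_zero_iff.mp h0)
    · rcases h.eq_or_lt with h | h
      · exact Or.inr (Or.inl (by simpa using congrArg (i + ·) (Fin.ext h : x - i = j - i)))
      · exact Or.inr (Or.inr ⟨h0, h⟩)

lemma val_sub_lt_of_closedArc_subset_openArc {m : ℕ} [NeZero m] {i j i' j' : Fin m}
    (hne : i' ≠ j') (h : ∀ y, inClosedArc i' j' y → inOpenArc i j y) :
    0 < (i' - i).val ∧ (i' - i).val < (j' - i).val ∧ (j' - i).val < (j - i).val := by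
  have hi' := h i' (Or.inl rfl)
  have hj' := h j' (Or.inr (Or.inl rfl))
  unfold inOpenArc at hi' hj'
  have hpos : (j' - i').val ≠ 0 := fun h0 => hne (Fin.val_sub_eq_zero_iff.mp h0).symm
  have hii' : i ≠ i' := by rintro rfl; simp at hi'
  have hpq := Fin.val_sub_add_val_sub_comm hii'
  refine ⟨hi'.1, ?_, hj'.2⟩
  rcases Fin.val_sub_add_val_sub i i' j' with h' | h'
  · omega
  · -- otherwise the arc from `i'` to `j'` would pass through `i`
    have hi := h i ((inClosedArc_iff _ _ _).mpr (by omega))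
    simp [inOpenArc] at hi

def window {m : ℕ} (i : Fin m) (t : ℕ) : Finset (Fin m) :=
  {x | 0 < (x - i).val ∧ (x - i).val ≤ t}

@[simp] lemma mem_window {m : ℕ} {i x : Fin m} {t : ℕ} :
    x ∈ window i t ↔ 0 < (x - i).val ∧ (x - i).val ≤ t := by
  simp [window]

section Walk

variable {m : ℕ} [NeZero m] (S : Finset (Fin m)) (i : Fin m)

def walk (t : ℕ) : ℤ :=
  ∑ s ∈ Icc 1 t, if i + (s : Fin m) ∈ S then 1 else -1

@[simp] lemma walk_zero : walk S i 0 = 0 := by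
  simp [walk]

lemma walk_succ (t : ℕ) :
    walk S i (t + 1) = walk S i t + if i + ((t + 1 : ℕ) : Fin m) ∈ S then 1 else -1 := by
  rw [walk, sum_Icc_succ_top (by omega)]
  rfl

lemma walk_succ_of_mem {t : ℕ} (h : i + ((t + 1 : ℕ) : Fin m) ∈ S) :
    walk S i (t + 1) = walk S i t + 1 := by
  rw [walk_succ, if_pos h]

lemma walk_succ_of_notMem {t : ℕ} (h : i + ((t + 1 : ℕ) : Fin m) ∉ S) :
    walk S i (t + 1) = walk S i t - 1 := by
  rw [walk_succ, if_neg h, Int.add_neg_one]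

lemma walk_sub_one_le_walk_succ (t : ℕ) : walk S i t - 1 ≤ walk S i (t + 1) := by
  rw [walk_succ]
  split <;> omega

lemma walk_add_natCast (p t : ℕ) : walk S (i + p) t = walk S i (p + t) - walk S i p := by
  induction t with
  | zero => simp
  | succ t ih =>
    rw [walk_succ, ih, ← add_assoc, walk_succ, add_assoc i, ← Nat.cast_add, add_assoc p]
    ring

lemma walk_eq_card_sub_card {t : ℕ} (ht : t < m) :
    walk S i t = #(window i t ∩ S) - #(window i t \ S) := by
  have hsum : walk S i t = ∑ x ∈ window i t, if x ∈ S then (1 : ℤ) else -1 := by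
    refine sum_nbij' (fun s => i + s) (fun x => (x - i).val) ?_ ?_ ?_ ?_ fun _ _ => rfl
    · intro s hs
      simp only [mem_Icc, mem_window] at hs ⊢
      rw [Fin.val_add_natCast_sub i (by omega)]
      omega
    · intro x hx
      simp only [mem_Icc, mem_window] at hx ⊢
      omega
    · intro s hs
      simp only [mem_Icc] at hs
      exact Fin.val_add_natCast_sub i (by omega)
    · intro x _
      exact Fin.add_natCast_val_sub i x
  rw [hsum, sum_ite, sum_const, sum_const, filter_mem_eq_inter]
  simp [sdiff_eq_filter, sub_eq_add_neg]

lemma walk_sub_one_of_mem (hi : i ∈ S) : walk S i (m - 1) = 2 * #S - m - 1 := by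
  have hwin : window i (m - 1) = univ.erase i := by
    ext x
    have := (x - i).isLt
    simp only [mem_window, mem_erase, mem_univ, and_true, ne_eq, ← Fin.val_sub_eq_zero_iff]
    omega
  have h1 : #(univ.erase i ∩ S) = #S - 1 := by
    rw [erase_inter, univ_inter, card_erase_of_mem hi]
  have h2 : #(univ.erase i \ S) = m - #S := by
    rw [erase_sdiff_comm, erase_eq_of_notMem (by simp [hi]), card_univ_sdiff, Fintype.card_fin]
  have h3 : 0 < #S := card_pos.mpr ⟨i, hi⟩
  have h4 : #S ≤ m := card_le_univ S |>.trans_eq (Fintype.card_fin m)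
  rw [walk_eq_card_sub_card S i (by omega), hwin, h1, h2]
  omega

end Walk

section ClosingOffset

variable {m : ℕ} [NeZero m] {S : Finset (Fin m)} {i : Fin m}

def IsClosingOffset (S : Finset (Fin m)) (i : Fin m) (T : ℕ) : Prop :=
  0 < T ∧ walk S i T = -1 ∧ ∀ t < T, 0 ≤ walk S i t

namespace IsClosingOffset

lemma unique {T T' : ℕ} (h : IsClosingOffset S i T) (h' : IsClosingOffset S i T') :
    T = T' := by
  by_contra hne
  rcases Nat.lt_or_gt_of_ne hne with hlt | hlt
  · linarith [h'.2.2 T hlt, h.2.1]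
  · linarith [h.2.2 T' hlt, h'.2.1]

lemma notMem {T : ℕ} (h : IsClosingOffset S i T) : i + (T : Fin m) ∉ S := by
  obtain ⟨hT0, hT, hbefore⟩ := h
  obtain ⟨t, rfl⟩ := Nat.exists_eq_succ_of_ne_zero hT0.ne'
  intro hmem
  have := hbefore t (by omega)
  rw [walk_succ_of_mem S i hmem] at hT
  omega

lemma exists_of_mem (hi : i ∈ S) (hS : 2 * #S ≤ m) : ∃ T < m, IsClosingOffset S i T := by
  obtain ⟨u, hu0, hum, hu, hbefore⟩ := exists_first_hit (walk_sub_one_le_walk_succ S i)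
    (Nat.zero_le (m - 1)) (c := -1) (by simp) (by rw [walk_sub_one_of_mem S i hi]; omega)
  exact ⟨u, by omega, hu0, hu, fun t ht => by have := hbefore t t.zero_le ht; omega⟩

/-- An opener inside the arc of `i` is matched before `i` is: after it the walk must come back
down to its level just below the opener before it can reach `-1`. -/
lemma nested {T T' p : ℕ} (hT : IsClosingOffset S i T) (hp : i + (p : Fin m) ∈ S)
    (hp0 : 0 < p) (hpT : p < T) (hT' : IsClosingOffset S (i + p) T') : p + T' < T := by
  obtain ⟨q, rfl⟩ : ∃ q, p = q + 1 := ⟨p - 1, by omega⟩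
  have hwp : 1 ≤ walk S i (q + 1) := by
    rw [walk_succ_of_mem S i hp]
    have := hT.2.2 q (by omega)
    omega
  obtain ⟨u, hpu, huT, hu, hbefore⟩ := exists_first_hit (walk_sub_one_le_walk_succ S i)
    hpT.le (c := walk S i (q + 1) - 1) (by omega) (by rw [hT.2.1]; omega)
  have hu' : IsClosingOffset S (i + (q + 1 : ℕ)) (u - (q + 1)) := by
    refine ⟨by omega, ?_, fun t ht => ?_⟩
    · rw [walk_add_natCast, Nat.add_sub_cancel' hpu.le, hu]
      ring
    · rw [walk_add_natCast]
      have := hbefore (q + 1 + t) (by omega) (by omega)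
      omega
  have huT' : u ≠ T := by
    rintro rfl
    rw [hT.2.1] at hu
    omega
  have := hT'.unique hu'
  omega

lemma nested_of_le {j : Fin m} {T T' : ℕ} (hT : IsClosingOffset S i T)
    (hT' : IsClosingOffset S j T') (hj : j ∈ S) (hne : i ≠ j) (hle : (j - i).val ≤ T) :
    (j - i).val + T' < T := by
  have hp0 : 0 < (j - i).val :=
    Nat.pos_of_ne_zero fun h => hne (Fin.val_sub_eq_zero_iff.mp h).symm
  obtain ⟨p, hp, rfl⟩ : ∃ p, (j - i).val = p ∧ i + (p : Fin m) = j :=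
    ⟨_, rfl, Fin.add_natCast_val_sub i j⟩
  rw [hp] at hle hp0 ⊢
  rcases hle.eq_or_lt with rfl | hlt
  · exact absurd hj hT.notMem
  · exact hT.nested hj hp0 hlt hT'

/-- The arcs of two openers are nested one way or the other, or disjoint. -/
lemma trichotomy {j : Fin m} {T T' : ℕ} (hT : IsClosingOffset S i T)
    (hT' : IsClosingOffset S j T') (hi : i ∈ S) (hj : j ∈ S) (hne : i ≠ j) :
    (j - i).val + T' < T ∨ (i - j).val + T < T' ∨ (T < (j - i).val ∧ T' < (i - j).val) := by
  by_cases h : (j - i).val ≤ T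
  · exact Or.inl (hT.nested_of_le hT' hj hne h)
  by_cases h' : (i - j).val ≤ T'
  · exact Or.inr (Or.inl (hT'.nested_of_le hT hi hne.symm h'))
  · exact Or.inr (Or.inr ⟨by omega, by omega⟩)

end IsClosingOffset

end ClosingOffset

section Partner

variable {m : ℕ} [NeZero m] {S : Finset (Fin m)} {i : Fin m}

open Classical in
noncomputable def closingOffset (S : Finset (Fin m)) (i : Fin m) : ℕ :=
  if h : ∃ T, IsClosingOffset S i T then h.choose else 0

noncomputable def partner (S : Finset (Fin m)) (i : Fin m) : Fin m :=
  i + (closingOffset S i : Fin m)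

lemma isClosingOffset_closingOffset (hS : 2 * #S ≤ m) (hi : i ∈ S) :
    IsClosingOffset S i (closingOffset S i) := by
  obtain ⟨T, -, hT⟩ := IsClosingOffset.exists_of_mem hi hS
  have hex : ∃ T, IsClosingOffset S i T := ⟨T, hT⟩
  rw [closingOffset, dif_pos hex]
  exact hex.choose_spec

lemma IsClosingOffset.closingOffset_eq {T : ℕ} (hT : IsClosingOffset S i T) :
    closingOffset S i = T := by
  have hex : ∃ T, IsClosingOffset S i T := ⟨T, hT⟩
  rw [closingOffset, dif_pos hex]
  exact hex.choose_spec.unique hT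

lemma closingOffset_lt (hS : 2 * #S ≤ m) (hi : i ∈ S) : closingOffset S i < m := by
  obtain ⟨T, hTm, hT⟩ := IsClosingOffset.exists_of_mem hi hS
  rwa [hT.closingOffset_eq]

lemma val_partner_sub (hS : 2 * #S ≤ m) (hi : i ∈ S) :
    (partner S i - i).val = closingOffset S i :=
  Fin.val_add_natCast_sub i (closingOffset_lt hS hi)

lemma partner_notMem (hS : 2 * #S ≤ m) (hi : i ∈ S) : partner S i ∉ S :=
  (isClosingOffset_closingOffset hS hi).notMem

lemma partner_ne_self (hS : 2 * #S ≤ m) (hi : i ∈ S) : partner S i ≠ i :=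
  fun h => partner_notMem hS hi (by rwa [h])

lemma partner_trichotomy (hS : 2 * #S ≤ m) {j : Fin m} (hi : i ∈ S) (hj : j ∈ S)
    (hne : i ≠ j) :
    (j - i).val + closingOffset S j < closingOffset S i ∨
      (i - j).val + closingOffset S i < closingOffset S j ∨
      (closingOffset S i < (j - i).val ∧ closingOffset S j < (i - j).val) :=
  (isClosingOffset_closingOffset hS hi).trichotomy (isClosingOffset_closingOffset hS hj) hi hj hne

lemma partner_injOn (hS : 2 * #S ≤ m) : Set.InjOn (partner S) S := by
  intro i hi j hj heq
  by_contra hne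
  have hpq := Fin.val_sub_add_val_sub_comm hne
  have hi' := val_partner_sub hS hi
  have hj' := val_partner_sub hS hj
  rw [heq] at hi'
  have := closingOffset_lt hS hi
  have := closingOffset_lt hS hj
  rcases partner_trichotomy hS hi hj hne with h | h | h <;>
    rcases Fin.val_sub_add_val_sub i j (partner S j) with h' | h' <;> omega

lemma partner_planar (hS : 2 * #S ≤ m) {j : Fin m} (hi : i ∈ S) (hj : j ∈ S) (hne : i ≠ j) :
    (∀ x, inClosedArc i (partner S i) x → inOpenArc j (partner S j) x) ∨
    (∀ x, inClosedArc j (partner S j) x → inOpenArc i (partner S i) x) ∨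
    (∀ x, ¬(inClosedArc i (partner S i) x ∧ inClosedArc j (partner S j) x)) := by
  have hpq := Fin.val_sub_add_val_sub_comm hne
  have := closingOffset_lt hS hi
  have := closingOffset_lt hS hj
  simp only [inClosedArc_iff, inOpenArc, val_partner_sub hS hi, val_partner_sub hS hj]
  rcases partner_trichotomy hS hi hj hne with h | h | h
  · refine Or.inr (Or.inl fun x hx => ?_)
    rcases Fin.val_sub_add_val_sub i j x with h' | h' <;> omega
  · refine Or.inl fun x hx => ?_
    rcases Fin.val_sub_add_val_sub j i x with h' | h' <;> omega
  · refine Or.inr (Or.inr fun x hx => ?_)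
    rcases Fin.val_sub_add_val_sub j i x with h' | h' <;> omega

/-- Inside the arc of `i` the walk ends at level `0`, so there are as many openers as
non-openers there; the openers' partners are distinct non-openers inside, hence all of them. -/
lemma exists_partner_eq (hS : 2 * #S ≤ m) (hi : i ∈ S) {x : Fin m} (hx : x ∉ S)
    (hin : inOpenArc i (partner S i) x) : ∃ j ∈ S, partner S j = x := by
  have hT := isClosingOffset_closingOffset hS hi
  have hTm := closingOffset_lt hS hi
  have hxT : (x - i).val < closingOffset S i := by
    rw [← val_partner_sub hS hi]
    exact hin.2
  generalize closingOffset S i = T at hT hTm hxT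
  obtain ⟨t, rfl⟩ : ∃ t, T = t + 1 := ⟨T - 1, by have := hT.1; omega⟩
  have hwalk : walk S i t = 0 := by
    have h := hT.2.1
    have := hT.2.2 t (by omega)
    rw [walk_succ] at h
    split at h <;> omega
  have hcard : #(window i t ∩ S) = #(window i t \ S) := by
    rw [walk_eq_card_sub_card S i (by omega)] at hwalk
    omega
  have hmaps : (window i t ∩ S).image (partner S) ⊆ window i t \ S := by
    intro y hy
    obtain ⟨j, hj, rfl⟩ := mem_image.mp hy
    rw [mem_inter, mem_window] at hj
    have hne : i ≠ j := by rintro rfl; simp at hj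
    have hpq := Fin.val_sub_add_val_sub_comm hne
    have := closingOffset_lt hS hj.2
    rw [mem_sdiff, mem_window]
    refine ⟨?_, partner_notMem hS hj.2⟩
    rcases hT.trichotomy (isClosingOffset_closingOffset hS hj.2) hi hj.2 hne with h | h | h <;>
      rcases Fin.val_sub_add_val_sub i j (partner S j) with h' | h' <;>
      rw [val_partner_sub hS hj.2] at h' <;> omega
  have himage := eq_of_subset_of_card_le hmaps
    (by rw [card_image_of_injOn ((partner_injOn hS).mono (by simp)), hcard])
  have hxw : x ∈ window i t \ S := by
    rw [mem_sdiff, mem_window]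
    exact ⟨⟨hin.1, by omega⟩, hx⟩
  rw [← himage] at hxw
  obtain ⟨j, hj, rfl⟩ := mem_image.mp hxw
  exact ⟨j, (mem_inter.mp hj).2, rfl⟩

end Partner

namespace AffineTLTop

variable {m lam : ℕ}

noncomputable def ofOpeners [NeZero m] (S : Finset (Fin m)) (hS : 2 * #S + lam = m) :
    AffineTLTop m lam where
  through := univ \ (S ∪ S.image (partner S))
  card_through := by
    have hdisj : Disjoint S (S.image (partner S)) := by
      simp only [disjoint_right, mem_image]
      rintro _ ⟨i, hi, rfl⟩
      exact partner_notMem (by omega) hi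
    rw [card_univ_sdiff, card_union_of_disjoint hdisj,
      card_image_of_injOn (partner_injOn (by omega)), Fintype.card_fin]
    omega
  arcs := S.image fun i => (i, partner S i)
  arc_ne := by
    simp only [forall_mem_image]
    exact fun i hi => (partner_ne_self (by omega) hi).symm
  endpoints_disjoint := by
    simp only [forall_mem_image, ne_eq, Prod.mk.injEq]
    intro i hi j hj hij
    have hne : i ≠ j := fun h => hij ⟨h, h ▸ rfl⟩
    refine ⟨hne, fun h => partner_notMem (by omega) hj (h ▸ hi), fun h => ?_,
      fun h => hne (partner_injOn (by omega) hi hj h)⟩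
    exact partner_notMem (by omega) hi (h ▸ hj)
  through_iff := by
    intro x
    simp only [forall_mem_image]
    simp only [mem_sdiff, mem_univ, mem_union, mem_image, true_and]
    grind
  through_outside := by
    simp only [forall_mem_image]
    simp only [mem_sdiff, mem_univ, mem_union, mem_image, true_and, not_or, not_exists, not_and]
    intro x ⟨hxS, hxP⟩ i hi hin
    obtain ⟨j, hj, hjx⟩ := exists_partner_eq (by omega) hi hxS hin
    exact hxP j hj hjx
  planar := by
    simp only [forall_mem_image, ne_eq, Prod.mk.injEq]
    intro i hi j hj hij
    exact partner_planar (by omega) hi hj fun h => hij ⟨h, h ▸ rfl⟩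

section Openers

variable (D : AffineTLTop m lam)

def openers : Finset (Fin m) := D.arcs.image Prod.fst

lemma fst_injOn : Set.InjOn Prod.fst (D.arcs : Set (Fin m × Fin m)) :=
  fun a ha b hb hab => by_contra fun hne => (D.endpoints_disjoint a ha b hb hne).1 hab

lemma snd_injOn : Set.InjOn Prod.snd (D.arcs : Set (Fin m × Fin m)) :=
  fun a ha b hb hab => by_contra fun hne => (D.endpoints_disjoint a ha b hb hne).2.2.2 hab

lemma snd_notMem_openers {a : Fin m × Fin m} (ha : a ∈ D.arcs) : a.2 ∉ D.openers := by
  rintro hmem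
  obtain ⟨b, hb, hba⟩ := mem_image.mp hmem
  by_cases hab : a = b
  · exact D.arc_ne b hb (hab ▸ hba)
  · exact (D.endpoints_disjoint a ha b hb hab).2.2.1 hba.symm

lemma exists_mem_arcs_of_notMem_through {x : Fin m} (hx : x ∉ D.through) :
    ∃ b ∈ D.arcs, x = b.1 ∨ x = b.2 := by
  rw [D.through_iff] at hx
  push Not at hx
  obtain ⟨b, hb, hxb⟩ := hx
  exact ⟨b, hb, or_iff_not_imp_left.mpr hxb⟩

lemma ext_of_arcs {D E : AffineTLTop m lam} (h : D.arcs = E.arcs) : D = E := by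
  have hthrough : D.through = E.through := by
    ext x
    rw [D.through_iff, E.through_iff, h]
  cases D
  cases E
  congr

lemma add_two_mul_card_openers : lam + 2 * #D.openers = m := by
  have hdisj : Disjoint D.openers (D.arcs.image Prod.snd) := by
    simp only [disjoint_right, mem_image]
    rintro _ ⟨a, ha, rfl⟩
    exact D.snd_notMem_openers ha
  have hthrough : D.through = univ \ (D.openers ∪ D.arcs.image Prod.snd) := by
    ext x
    simp only [D.through_iff, openers, mem_sdiff, mem_univ, mem_union, mem_image, true_and]
    grind
  have hfst : #D.openers = #D.arcs := card_image_of_injOn D.fst_injOn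
  have hle := card_le_univ (D.openers ∪ D.arcs.image Prod.snd)
  have hcard := D.card_through
  rw [hthrough, card_univ_sdiff, card_union_of_disjoint hdisj,
    card_image_of_injOn D.snd_injOn, Fintype.card_fin] at hcard
  rw [card_union_of_disjoint hdisj, card_image_of_injOn D.snd_injOn, Fintype.card_fin] at hle
  omega

open Classical in
noncomputable def nestedArcs (a : Fin m × Fin m) : Finset (Fin m × Fin m) :=
  D.arcs.filter fun b => ∀ y, inClosedArc b.1 b.2 y → inOpenArc a.1 a.2 y

lemma mem_nestedArcs {a b : Fin m × Fin m} :
    b ∈ D.nestedArcs a ↔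
      b ∈ D.arcs ∧ ∀ y, inClosedArc b.1 b.2 y → inOpenArc a.1 a.2 y := by
  classical
  simp only [nestedArcs, mem_filter]

lemma nestedArcs_subset (a : Fin m × Fin m) : D.nestedArcs a ⊆ D.arcs :=
  fun _ hb => (D.mem_nestedArcs.mp hb).1

variable [NeZero m]

lemma mem_nestedArcs_of_inOpenArc {a b : Fin m × Fin m} (ha : a ∈ D.arcs) (hb : b ∈ D.arcs)
    {x : Fin m} (hx : inOpenArc a.1 a.2 x) (hxb : x = b.1 ∨ x = b.2) : b ∈ D.nestedArcs a := by
  have hxb' : inClosedArc b.1 b.2 x := by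
    rcases hxb with rfl | rfl
    · exact Or.inl rfl
    · exact Or.inr (Or.inl rfl)
  have hab : a ≠ b := by
    rintro rfl
    rcases hxb with rfl | rfl <;> simp [inOpenArc] at hx
  refine D.mem_nestedArcs.mpr ⟨hb, ?_⟩
  rcases D.planar a ha b hb hab with h | h | h
  · have := h x (Or.inr (Or.inr hx))
    rcases hxb with rfl | rfl <;> simp [inOpenArc] at this
  · exact h
  · exact absurd ⟨Or.inr (Or.inr hx), hxb'⟩ (h x)

lemma val_sub_lt_of_mem_nestedArcs {a b : Fin m × Fin m} (hb : b ∈ D.nestedArcs a) :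
    0 < (b.1 - a.1).val ∧ (b.1 - a.1).val < (b.2 - a.1).val ∧
      (b.2 - a.1).val < (a.2 - a.1).val :=
  have hb := D.mem_nestedArcs.mp hb
  val_sub_lt_of_closedArc_subset_openArc (D.arc_ne b hb.1) hb.2

lemma window_inter_openers {a : Fin m × Fin m} (ha : a ∈ D.arcs) {t : ℕ}
    (ht : t < (a.2 - a.1).val) :
    window a.1 t ∩ D.openers =
      ((D.nestedArcs a).filter fun b => (b.1 - a.1).val ≤ t).image Prod.fst := by
  ext x
  simp only [mem_inter, mem_window, mem_image, mem_filter, openers]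
  constructor
  · rintro ⟨hx, b, hb, rfl⟩
    have hb' := D.mem_nestedArcs_of_inOpenArc ha hb ⟨hx.1, by omega⟩ (Or.inl rfl)
    exact ⟨b, ⟨hb', hx.2⟩, rfl⟩
  · rintro ⟨b, ⟨hb, hbt⟩, rfl⟩
    exact ⟨⟨(D.val_sub_lt_of_mem_nestedArcs hb).1, hbt⟩, b, D.nestedArcs_subset a hb, rfl⟩

lemma window_sdiff_openers {a : Fin m × Fin m} (ha : a ∈ D.arcs) {t : ℕ}
    (ht : t < (a.2 - a.1).val) :
    window a.1 t \ D.openers =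
      ((D.nestedArcs a).filter fun b => (b.2 - a.1).val ≤ t).image Prod.snd := by
  ext x
  simp only [mem_sdiff, mem_window, mem_image, mem_filter]
  constructor
  · rintro ⟨hx, hxS⟩
    have hin : inOpenArc a.1 a.2 x := ⟨hx.1, by omega⟩
    obtain ⟨b, hb, hxb⟩ :=
      D.exists_mem_arcs_of_notMem_through fun hxt => D.through_outside x hxt a ha hin
    have hxb2 : x = b.2 := hxb.resolve_left fun h => hxS (h ▸ mem_image_of_mem _ hb)
    exact ⟨b, ⟨D.mem_nestedArcs_of_inOpenArc ha hb hin hxb, hxb2 ▸ hx.2⟩, hxb2.symm⟩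
  · rintro ⟨b, ⟨hb, hbt⟩, rfl⟩
    have := D.val_sub_lt_of_mem_nestedArcs hb
    exact ⟨⟨by omega, hbt⟩, D.snd_notMem_openers (D.nestedArcs_subset a hb)⟩

/-- Inside an arc every point is an endpoint of a nested arc, and a nested arc opens before it
closes: so along the arc the openers seen so far are never outnumbered by the non-openers, and
just before its end the two counts agree. -/
lemma isClosingOffset {a : Fin m × Fin m} (ha : a ∈ D.arcs) :
    IsClosingOffset D.openers a.1 (a.2 - a.1).val := by
  have hwalk : ∀ t < (a.2 - a.1).val, walk D.openers a.1 t =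
      #((D.nestedArcs a).filter fun b => (b.1 - a.1).val ≤ t) -
        #((D.nestedArcs a).filter fun b => (b.2 - a.1).val ≤ t) := by
    intro t ht
    have hsub := coe_subset.mpr (D.nestedArcs_subset a)
    rw [walk_eq_card_sub_card _ _ (ht.trans (Fin.is_lt _)), D.window_inter_openers ha ht,
      D.window_sdiff_openers ha ht,
      card_image_of_injOn ((D.fst_injOn.mono hsub).mono (coe_subset.mpr (filter_subset _ _))),
      card_image_of_injOn ((D.snd_injOn.mono hsub).mono (coe_subset.mpr (filter_subset _ _)))]
  have hmono : ∀ t, (D.nestedArcs a).filter (fun b => (b.2 - a.1).val ≤ t) ⊆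
      (D.nestedArcs a).filter fun b => (b.1 - a.1).val ≤ t :=
    fun t => monotone_filter_right _ fun b hb hbt => by
      have := D.val_sub_lt_of_mem_nestedArcs hb
      omega
  have hT0 : 0 < (a.2 - a.1).val :=
    Nat.pos_of_ne_zero fun h => D.arc_ne a ha (Fin.val_sub_eq_zero_iff.mp h).symm
  refine ⟨hT0, ?_, fun t ht => ?_⟩
  · obtain ⟨t, ht⟩ : ∃ t, (a.2 - a.1).val = t + 1 := ⟨_, (Nat.sub_add_cancel hT0).symm⟩
    have hfull : ∀ b ∈ D.nestedArcs a, (b.1 - a.1).val ≤ t ∧ (b.2 - a.1).val ≤ t := by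
      intro b hb
      have := D.val_sub_lt_of_mem_nestedArcs hb
      omega
    have hlast : a.1 + ((t + 1 : ℕ) : Fin m) ∉ D.openers := by
      rw [← ht, Fin.add_natCast_val_sub]
      exact D.snd_notMem_openers ha
    rw [ht, walk_succ_of_notMem _ _ hlast, hwalk t (by omega),
      filter_true_of_mem fun b hb => (hfull b hb).1, filter_true_of_mem fun b hb => (hfull b hb).2]
    ring
  · rw [hwalk t ht, sub_nonneg, Nat.cast_le]
    exact card_le_card (hmono t)

end Openers

section Bijection

variable [NeZero m]

lemma partner_openers (D : AffineTLTop m lam) {a : Fin m × Fin m} (ha : a ∈ D.arcs) :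
    partner D.openers a.1 = a.2 := by
  rw [partner, (D.isClosingOffset ha).closingOffset_eq, Fin.add_natCast_val_sub]

lemma ofOpeners_openers (D : AffineTLTop m lam) (hS : 2 * #D.openers + lam = m) :
    ofOpeners D.openers hS = D := by
  refine ext_of_arcs (Finset.ext fun a => ?_)
  simp only [ofOpeners, mem_image]
  constructor
  · rintro ⟨i, hi, rfl⟩
    obtain ⟨b, hb, rfl⟩ := mem_image.mp hi
    rwa [D.partner_openers hb]
  · intro ha
    exact ⟨a.1, mem_image_of_mem _ ha, by rw [D.partner_openers ha]⟩

lemma openers_ofOpeners (S : Finset (Fin m)) (hS : 2 * #S + lam = m) :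
    (ofOpeners S hS).openers = S := by
  simp [openers, ofOpeners, image_image, Function.comp_def]

noncomputable def equivOpeners (k : ℕ) (hk : 2 * k + lam = m) :
    AffineTLTop m lam ≃ {S : Finset (Fin m) // #S = k} where
  toFun D := ⟨D.openers, by have := D.add_two_mul_card_openers; omega⟩
  invFun S := ofOpeners S.1 (by rw [S.2]; exact hk)
  left_inv D := ofOpeners_openers D _
  right_inv S := Subtype.ext (openers_ofOpeners S.1 _)

end Bijection

lemma natCard_zero : Nat.card (AffineTLTop 0 0) = 1 := by
  have hempty : ∀ s : Finset (Fin 0 × Fin 0), s = ∅ := fun s => Subsingleton.elim _ _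
  refine Nat.card_eq_one_iff_unique.mpr ⟨⟨fun D E => ext_of_arcs ?_⟩, ⟨?_⟩⟩
  · rw [hempty D.arcs, hempty E.arcs]
  · exact ⟨∅, rfl, ∅, by simp, by simp, fun x => x.elim0, by simp, by simp⟩

end AffineTLTop

/-- The number of affine Temperley--Lieb `(λ,m)`-diagrams with `λ` through lines and no
non-contractible loops equals `C(m, (m-λ)/2)`. -/
theorem stmt_0 (m lam : ℕ) (h : lam ≤ m) (heven : Even (m - lam)) :
    Nat.card (AffineTLTop m lam) = m.choose ((m - lam) / 2) := by
  obtain ⟨k, hk⟩ := heven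
  rw [show (m - lam) / 2 = k by omega]
  rcases eq_zero_or_neZero m with rfl | _
  · obtain rfl : lam = 0 := by omega
    obtain rfl : k = 0 := by omega
    exact AffineTLTop.natCard_zero
  · rw [Nat.card_congr (AffineTLTop.equivOpeners k (by omega)), Nat.card_eq_fintype_card,
      Fintype.card_finset_len, Fintype.card_fin]
end

section
/- Let M(x) = ∑_{n≥0} M_n x^n be the generating function of the Motzkin numbers, satisfying M(x) = 1 + x·M(x) + x²·M(x)². Then for integers m ≥ λ ≥ 1, (m/λ)·[x^{m-λ}] M(x)^λ = [t^{m-λ}] (1+t+t²)^m. -/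
/-!
Put `N = x M`, so that `N = x (1 + N + N²)` and `[x^(m-λ)] M^λ = [x^m] N^λ`. Comparing
coefficients in `N^(k+1) = x (N^k + N^(k+1) + N^(k+2))` gives
`a(n+1, k+1) = a(n, k) + a(n, k+1) + a(n, k+2)` for `a(n, k) = [x^n] N^k`. The numbers
`T(n, k) = [t^(n+k)] φ(t)^n`, `φ = 1 + t + t²`, satisfy the same recurrence, and also
`(k - n) T(n, k) + (k + 1) T(n, k+1) + (n + k + 2) T(n, k+2) = 0`, the coefficient form of
`φ (φ^n)' = n φ' φ^n`. Together these give `n a(n, k) = k T(n, k)` by induction on `n`.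
Finally `T(m, λ) = [t^(m-λ)] φ^m` because `φ^m` is palindromic of degree `2m`.
-/

open PowerSeries

section Trinomial

variable {R : Type*} [CommRing R]

/-- Indexed from the middle coefficient of `(1 + X + X²) ^ n`, so that the recurrences below
involve no truncated subtraction. -/
noncomputable def trinomialCoeff (n k : ℕ) : R :=
  coeff (n + k) ((1 + X + X ^ 2 : R⟦X⟧) ^ n)

theorem Polynomial.reflect_one_add_X_add_X_sq_pow (n : ℕ) :
    ((1 + X + X ^ 2 : Polynomial R) ^ n).reflect (2 * n) = (1 + X + X ^ 2) ^ n := by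
  have hdeg : (1 + X + X ^ 2 : Polynomial R).natDegree ≤ 2 := by compute_degree
  induction n with
  | zero => simp
  | succ n ih =>
    rw [pow_succ, Nat.mul_succ,
      reflect_mul _ _ ((natDegree_pow_le_of_le n hdeg).trans_eq (mul_comm _ _)) hdeg, ih]
    congr 1
    rw [reflect_add, reflect_add, reflect_one, reflect_monomial, ← pow_one (X : Polynomial R),
      reflect_monomial, revAt_le (by norm_num), revAt_le (by norm_num)]
    ring

theorem trinomialCoeff_eq_coeff_sub {n k : ℕ} (hk : k ≤ n) :
    (trinomialCoeff n k : R) = coeff (n - k) ((1 + X + X ^ 2 : R⟦X⟧) ^ n) := by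
  have hcoe : (1 + X + X ^ 2 : R⟦X⟧) ^ n =
      ((1 + Polynomial.X + Polynomial.X ^ 2) ^ n : Polynomial R) := by
    push_cast
    rfl
  rw [trinomialCoeff, hcoe, Polynomial.coeff_coe, Polynomial.coeff_coe]
  conv_lhs => rw [← Polynomial.reflect_one_add_X_add_X_sq_pow, Polynomial.coeff_reflect,
    Polynomial.revAt_le (by omega), show 2 * n - (n + k) = n - k by omega]

theorem trinomialCoeff_succ_succ (n k : ℕ) :
    (trinomialCoeff (n + 1) (k + 1) : R) =
      trinomialCoeff n k + trinomialCoeff n (k + 1) + trinomialCoeff n (k + 2) := by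
  rw [trinomialCoeff, pow_succ, mul_comm, add_mul, add_mul, one_mul, map_add, map_add,
    show n + 1 + (k + 1) = n + (k + 1) + 1 by omega, coeff_succ_X_mul,
    show n + (k + 1) + 1 = n + k + 2 by omega, coeff_X_pow_mul]
  simp only [trinomialCoeff, ← add_assoc]
  ring

theorem trinomialCoeff_relation (n k : ℕ) :
    ((k : R) - n) * trinomialCoeff n k + (k + 1) * trinomialCoeff n (k + 1)
      + (n + k + 2) * trinomialCoeff n (k + 2) = 0 := by
  have hf : (1 + X + X ^ 2 : R⟦X⟧) * d⁄dX R ((1 + X + X ^ 2) ^ n)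
      = C (n : R) * (1 + 2 * X) * (1 + X + X ^ 2) ^ n := by
    rcases n with _ | n
    · simp
    · rw [derivative_pow]
      simp [pow_succ]
      ring
  set f : R⟦X⟧ := (1 + X + X ^ 2) ^ n
  have hX2 : coeff (n + k + 1) (X ^ 2 * d⁄dX R f) = (n + k : ℕ) * coeff (n + k) f := by
    rcases Nat.eq_zero_or_pos (n + k) with h | h
    · rw [h, coeff_X_pow_mul']
      simp
    · obtain ⟨j, hj⟩ : ∃ j, n + k = j + 1 := ⟨n + k - 1, by omega⟩
      rw [hj, show j + 1 + 1 = j + 2 by rfl, coeff_X_pow_mul, coeff_derivative]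
      push_cast
      ring
  have h := congrArg (coeff (n + k + 1)) hf
  rw [show C (n : R) * (1 + 2 * X) * f = C (n : R) * (f + X * f + X * f) by ring] at h
  simp only [add_mul, one_mul, map_add, coeff_succ_X_mul, hX2, coeff_derivative,
    coeff_C_mul] at h
  simp only [trinomialCoeff, ← add_assoc]
  push_cast at h
  linear_combination h

end Trinomial

section MotzkinLagrange

variable {R : Type*} [CommRing R] {N : R⟦X⟧}

theorem constantCoeff_eq_zero_of_eq_X_mul (hN : N = X * (1 + N + N ^ 2)) :
    constantCoeff N = 0 := by
  rw [hN, map_mul, constantCoeff_X, zero_mul]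

theorem coeff_succ_pow_succ_of_eq_X_mul (hN : N = X * (1 + N + N ^ 2)) (n k : ℕ) :
    coeff (n + 1) (N ^ (k + 1))
      = coeff n (N ^ k) + coeff n (N ^ (k + 1)) + coeff n (N ^ (k + 2)) := by
  have h : N ^ (k + 1) = X * (N ^ k + N ^ (k + 1) + N ^ (k + 2)) :=
    calc N ^ (k + 1) = N ^ k * (X * (1 + N + N ^ 2)) := by rw [← hN, pow_succ]
      _ = X * (N ^ k + N ^ (k + 1) + N ^ (k + 2)) := by ring
  conv_lhs => rw [h, coeff_succ_X_mul, map_add, map_add]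

theorem natCast_mul_coeff_pow_eq_mul_trinomialCoeff [IsDomain R] [CharZero R]
    (hN : N = X * (1 + N + N ^ 2)) (n k : ℕ) :
    (n : R) * coeff n (N ^ k) = k * trinomialCoeff n k := by
  induction n generalizing k with
  | zero => cases k <;> simp [trinomialCoeff, coeff_one]
  | succ n ih =>
    cases k with
    | zero => simp [coeff_one]
    | succ k =>
      rw [coeff_succ_pow_succ_of_eq_X_mul hN, trinomialCoeff_succ_succ]
      rcases Nat.eq_zero_or_pos n with rfl | hn
      · cases k <;> simp [trinomialCoeff, coeff_one, coeff_zero_eq_constantCoeff_apply,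
          constantCoeff_eq_zero_of_eq_X_mul hN]
      · refine mul_left_cancel₀ (Nat.cast_ne_zero.mpr hn.ne' : (n : R) ≠ 0) ?_
        calc (n : R) * ((n + 1 : ℕ) *
              (coeff n (N ^ k) + coeff n (N ^ (k + 1)) + coeff n (N ^ (k + 2))))
            = (n + 1) * (n * coeff n (N ^ k) + n * coeff n (N ^ (k + 1))
                + n * coeff n (N ^ (k + 2))) := by
              push_cast
              ring
          _ = (n + 1) * (k * trinomialCoeff n k + (k + 1 : ℕ) * trinomialCoeff n (k + 1)
                + (k + 2 : ℕ) * trinomialCoeff n (k + 2)) := by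
              rw [ih, ih, ih]
          _ = n * ((k + 1 : ℕ) *
                (trinomialCoeff n k + trinomialCoeff n (k + 1) + trinomialCoeff n (k + 2))) := by
              push_cast
              linear_combination trinomialCoeff_relation (R := R) n k

end MotzkinLagrange

/-- Let `M` be the generating function of the Motzkin numbers, i.e. the (unique) power
series satisfying `M = 1 + x·M + x²·M²`.  Then for `m ≥ λ ≥ 1`,
`(m/λ)·[x^(m-λ)] M^λ = [t^(m-λ)] (1+t+t²)^m`. -/
theorem stmt_2 (M : PowerSeries ℚ)
    (hM : M = 1 + PowerSeries.X * M + PowerSeries.X ^ 2 * M ^ 2)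
    (m lam : ℕ) (h1 : 1 ≤ lam) (h : lam ≤ m) :
    (m : ℚ) / (lam : ℚ) * (PowerSeries.coeff (R := ℚ) (m - lam)) (M ^ lam)
      = (PowerSeries.coeff (R := ℚ) (m - lam))
          ((1 + PowerSeries.X + PowerSeries.X ^ 2) ^ m) := by
  have hN : X * M = X * (1 + X * M + (X * M) ^ 2) := by
    conv_lhs => rw [hM]
    ring
  have hcoeff : coeff m ((X * M) ^ lam) = coeff (m - lam) (M ^ lam) := by
    rw [mul_pow, ← Nat.sub_add_cancel h, coeff_X_pow_mul, Nat.sub_add_cancel h]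
  have key := natCast_mul_coeff_pow_eq_mul_trinomialCoeff hN m lam
  rw [hcoeff, trinomialCoeff_eq_coeff_sub h] at key
  have hlam : (lam : ℚ) ≠ 0 := Nat.cast_ne_zero.mpr (by omega)
  rw [div_mul_eq_mul_div, key, mul_div_cancel_left₀ _ hlam]
end

section
/- (Lagrange inversion, power case) Let F(x) be a formal power series over a commutative ring with F(0)=0 satisfying F(x) = x·φ(F(x)), where φ(t) is a formal power series with φ(0) invertible. Then for all integers n ≥ k ≥ 1, n·[x^n] (F(x))^k = k·[t^{n-k}] (φ(t))^n. -/
/-!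
Write `F = X·G`, so that `G = φ(X·G)`. Over a ring without additive torsion, strong induction
on `m` gives `(m + k)·[x^m] G^k = k·[x^m] φ^(m+k)`: expanding `G^k = φ^k(X·G)`, the induction
hypothesis turns `m·[x^m] G^k` into `[x^(m-1)] (φ^k)'·φ^m`, and `(m + k)·(φ^k)'·φ^m = k·(φ^(m+k))'`
has `x^(m-1)`-coefficient `k·m·[x^m] φ^(m+k)`; then cancel `m`.
For a general ring, `G ↦ φ(X·G)` is an `X`-adic contraction, so `G` is its unique fixed point
and hence the specialisation of the solution for the generic series `∑ Xᵢ tⁱ` over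
`ℤ[X₀, X₁, …]`, where the identity already holds.
-/

open PowerSeries Finset

theorem Derivation.add_nsmul_map_pow_mul_pow {R A : Type*} [CommSemiring R] [CommSemiring A]
    [Algebra R A] (D : Derivation R A A) (a : A) (k j : ℕ) :
    (k + j) • (D (a ^ k) * a ^ j) = k • D (a ^ (k + j)) := by
  rcases k with _ | k
  · simp
  · rw [D.leibniz_pow, D.leibniz_pow, add_right_comm k 1 j]
    simp only [Nat.add_sub_cancel, smul_eq_mul, nsmul_eq_mul, pow_add]
    push_cast
    ring

namespace PowerSeries

variable {R : Type*} [CommRing R]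

theorem coeff_subst_eq_sum_range {F : R⟦X⟧} (hF : constantCoeff F = 0) (f : R⟦X⟧) (m : ℕ) :
    coeff m (f.subst F) = ∑ j ∈ range (m + 1), coeff j f * coeff m (F ^ j) := by
  rw [coeff_subst' (HasSubst.of_constantCoeff_zero' hF)]
  refine finsum_eq_sum_of_support_subset _ fun j hj => ?_
  rw [coe_range, Set.mem_Iio, Nat.lt_succ_iff]
  by_contra! h
  have hFj : coeff m (F ^ j) = 0 :=
    coeff_of_lt_order _ ((Nat.cast_lt.mpr h).trans_le (le_order_pow_of_constantCoeff_eq_zero j hF))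
  exact hj (by simp only [hFj, smul_zero])

theorem coeff_pow_subst {F : R⟦X⟧} (hF : constantCoeff F = 0) (f : R⟦X⟧) (m k : ℕ) :
    coeff m ((f.subst F) ^ k) = ∑ j ∈ range (m + 1), coeff j (f ^ k) * coeff m (F ^ j) := by
  rw [← subst_pow (HasSubst.of_constantCoeff_zero' hF), coeff_subst_eq_sum_range hF]

theorem X_pow_dvd_subst_sub_subst {F F' : R⟦X⟧} (hF : constantCoeff F = 0)
    (hF' : constantCoeff F' = 0) {m : ℕ} (h : X ^ m ∣ F - F') (f : R⟦X⟧) :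
    X ^ m ∣ f.subst F - f.subst F' := by
  refine X_pow_dvd_iff.mpr fun i hi => ?_
  rw [map_sub, coeff_subst_eq_sum_range hF, coeff_subst_eq_sum_range hF', ← sum_sub_distrib]
  refine sum_eq_zero fun j _ => ?_
  rw [← mul_sub, ← map_sub, X_pow_dvd_iff.mp (h.trans (sub_dvd_pow_sub_pow F F' j)) i hi,
    mul_zero]

theorem sum_antidiagonal_smul_coeff_mul_coeff (f g : R⟦X⟧) (m : ℕ) :
    ∑ p ∈ antidiagonal (m + 1), p.1 • (coeff p.1 f * coeff p.2 g) = coeff m (d⁄dX R f * g) := by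
  rw [Nat.sum_antidiagonal_succ, coeff_mul]
  simp only [zero_smul, zero_add, coeff_derivative]
  refine sum_congr rfl fun p _ => ?_
  rw [nsmul_eq_mul]
  push_cast
  ring

theorem coeff_X_mul_pow (G : R⟦X⟧) {n j : ℕ} (h : j ≤ n) :
    coeff n ((X * G) ^ j) = coeff (n - j) (G ^ j) := by
  rw [mul_pow, coeff_X_pow_mul', if_pos h]

section TorsionFree

variable {S : Type*} [CommRing S] [IsAddTorsionFree S]

theorem add_nsmul_coeff_pow_of_eq_subst {φ G : S⟦X⟧} (hG : G = φ.subst (X * G)) (m k : ℕ) :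
    (m + k) • coeff m (G ^ k) = k • coeff m (φ ^ (m + k)) := by
  have hXG : constantCoeff (X * G) = 0 := by simp
  induction m using Nat.strong_induction_on generalizing k with
  | _ m ih =>
    have hGk := coeff_pow_subst hXG φ m k
    rw [← hG] at hGk
    rcases m with _ | m
    · simp [hGk]
    have hterm : ∀ j ∈ range (m + 2),
        (m + 1) • (coeff j (φ ^ k) * coeff (m + 1) ((X * G) ^ j)) =
          j • (coeff j (φ ^ k) * coeff (m + 1 - j) (φ ^ (m + 1))) := by
      intro j hj
      rw [mem_range, Nat.lt_succ_iff] at hj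
      rcases j with _ | j
      · simp
      rw [coeff_X_mul_pow G hj, ← mul_smul_comm, ← mul_smul_comm]
      congr 1
      have hmj : m - j + (j + 1) = m + 1 := by omega
      rw [Nat.add_sub_add_right, ← hmj]
      exact ih (m - j) (by omega) (j + 1)
    have hA : (m + 1) • coeff (m + 1) (G ^ k) = coeff m (d⁄dX S (φ ^ k) * φ ^ (m + 1)) := by
      rw [← sum_antidiagonal_smul_coeff_mul_coeff, Nat.sum_antidiagonal_eq_sum_range_succ_mk,
        hGk, smul_sum]
      exact sum_congr rfl hterm
    apply IsAddTorsionFree.nsmul_right_injective m.succ_ne_zero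
    dsimp only
    calc (m + 1) • ((m + 1 + k) • coeff (m + 1) (G ^ k))
        = coeff m ((k + (m + 1)) • (d⁄dX S (φ ^ k) * φ ^ (m + 1))) := by
          rw [smul_comm, hA, map_nsmul, add_comm k]
      _ = (m + 1) • k • coeff (m + 1) (φ ^ (m + 1 + k)) := by
          rw [Derivation.add_nsmul_map_pow_mul_pow, map_nsmul, coeff_derivative, add_comm k,
            smul_comm]
          simp only [nsmul_eq_mul]
          push_cast
          ring

end TorsionFree

theorem eq_zero_of_forall_X_pow_dvd {f : R⟦X⟧} (h : ∀ m, X ^ m ∣ f) : f = 0 := by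
  ext n
  exact X_pow_dvd_iff.mp (h (n + 1)) n n.lt_succ_self

theorem existsUnique_isFixedPt_of_X_pow_dvd_sub {T : R⟦X⟧ → R⟦X⟧}
    (hT : ∀ m f g, X ^ m ∣ f - g → X ^ (m + 1) ∣ T f - T g) :
    ∃! f, Function.IsFixedPt T f := by
  have hstep : ∀ m, X ^ m ∣ T^[m + 1] 0 - T^[m] 0 := by
    intro m
    induction m with
    | zero => simp
    | succ m ih =>
      have := hT m _ _ ih
      rwa [← Function.iterate_succ_apply' T (m + 1), ← Function.iterate_succ_apply' T m] at this
  have hcauchy : ∀ m m', m ≤ m' → X ^ m ∣ T^[m'] 0 - T^[m] 0 := by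
    intro m m' hmm'
    induction m', hmm' using Nat.le_induction with
    | base => simp
    | succ m' hmm' ih =>
      rw [← sub_add_sub_cancel _ (T^[m'] 0)]
      exact dvd_add ((pow_dvd_pow X hmm').trans (hstep m')) ih
  set f : R⟦X⟧ := mk fun n => coeff n (T^[n + 1] 0)
  have hf : ∀ m, X ^ m ∣ f - T^[m] 0 := fun m => X_pow_dvd_iff.mpr fun i hi => by
    rw [map_sub, coeff_mk, ← map_sub, ← neg_sub, map_neg,
      X_pow_dvd_iff.mp (hcauchy (i + 1) m hi) i i.lt_succ_self, neg_zero]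
  have hfix : Function.IsFixedPt T f := by
    refine sub_eq_zero.mp (eq_zero_of_forall_X_pow_dvd fun m => ?_)
    rw [← sub_sub_sub_cancel_right _ _ (T^[m + 1] 0)]
    refine (pow_dvd_pow X m.le_succ).trans (dvd_sub ?_ (hf (m + 1)))
    rw [Function.iterate_succ_apply']
    exact hT m _ _ (hf m)
  refine ⟨f, hfix, fun g hg => sub_eq_zero.mp (eq_zero_of_forall_X_pow_dvd fun m => ?_)⟩
  induction m with
  | zero => simp
  | succ m ih => simpa only [hg.eq, hfix.eq] using hT m _ _ ih

theorem X_pow_succ_dvd_subst_X_mul_sub {G G' : R⟦X⟧} {m : ℕ} (h : X ^ m ∣ G - G') (f : R⟦X⟧) :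
    X ^ (m + 1) ∣ f.subst (X * G) - f.subst (X * G') :=
  X_pow_dvd_subst_sub_subst (by simp) (by simp)
    (by rw [← mul_sub, pow_succ']; exact mul_dvd_mul_left X h) f

theorem existsUnique_eq_subst_X_mul (φ : R⟦X⟧) : ∃! G : R⟦X⟧, G = φ.subst (X * G) := by
  simpa only [Function.IsFixedPt, eq_comm] using
    existsUnique_isFixedPt_of_X_pow_dvd_sub fun m _ _ h => X_pow_succ_dvd_subst_X_mul_sub h φ

theorem map_eq_subst_X_mul_map {R' : Type*} [CommRing R'] (h : R →+* R') {φ G : R⟦X⟧}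
    (hG : G = φ.subst (X * G)) : map h G = (map h φ).subst (X * map h G) := by
  conv_lhs => rw [hG]
  rw [← map_X h, ← map_mul]
  exact map_subst (HasSubst.of_constantCoeff_zero' (by simp)) φ

end PowerSeries

theorem stmt_3_general {R : Type*} [CommRing R] (F φ G : PowerSeries R)
    (hF0 : PowerSeries.constantCoeff F = 0)
    (hG : ∀ n : ℕ, PowerSeries.coeff n G =
      ∑ k ∈ Finset.range (n + 1),
        PowerSeries.coeff k φ * PowerSeries.coeff n (F ^ k))
    (hFeq : F = PowerSeries.X * G)
    (n k : ℕ) (hkn : k ≤ n) :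
    (n : R) * PowerSeries.coeff n (F ^ k)
      = (k : R) * PowerSeries.coeff (n - k) (φ ^ n) := by
  have hG_subst : G = φ.subst (X * G) := by
    ext i
    rw [← hFeq, coeff_subst_eq_sum_range hF0, hG]
  set φu : (MvPolynomial ℕ ℤ)⟦X⟧ := mk MvPolynomial.X
  set h := MvPolynomial.eval₂Hom (Int.castRingHom R) fun i => coeff i φ
  have hφu : map h φu = φ := by
    ext i
    simp [φu, h]
  obtain ⟨Gu, hGu, -⟩ := existsUnique_eq_subst_X_mul φu
  have hmap : map h Gu = G :=
    (existsUnique_eq_subst_X_mul φ).unique (hφu ▸ map_eq_subst_X_mul_map h hGu) hG_subst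
  have key := congrArg h (add_nsmul_coeff_pow_of_eq_subst hGu (n - k) k)
  rw [Nat.sub_add_cancel hkn, map_nsmul, map_nsmul, ← coeff_map, ← coeff_map, map_pow (map h),
    map_pow (map h), hmap, hφu] at key
  rw [hFeq, coeff_X_mul_pow G hkn, ← nsmul_eq_mul, ← nsmul_eq_mul, ← key]

/-- **Lagrange inversion, power case.**  Let `F` be a formal power series over a commutative
ring `R` with `F(0) = 0`, satisfying `F(x) = x·φ(F(x))` where `φ` is a power series whose
constant coefficient is invertible.  The composite `φ(F(x))` is encoded as the power series
`G` whose `n`-th coefficient is `∑_{k=0}^{n} φ_k · [x^n](F^k)` (this is the usual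
coefficientwise definition of composition, valid since `F(0) = 0`).  Then for all
`n ≥ k ≥ 1` one has `n·[x^n](F^k) = k·[t^(n-k)](φ^n)`. -/
theorem stmt_3 {R : Type*} [CommRing R] (F φ G : PowerSeries R)
    (hF0 : PowerSeries.constantCoeff F = 0)
    (hφ0 : IsUnit (PowerSeries.constantCoeff φ))
    (hG : ∀ n : ℕ, PowerSeries.coeff n G =
      ∑ k ∈ Finset.range (n + 1),
        PowerSeries.coeff k φ * PowerSeries.coeff n (F ^ k))
    (hFeq : F = PowerSeries.X * G)
    (n k : ℕ) (hk : 1 ≤ k) (hkn : k ≤ n) :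
    (n : R) * PowerSeries.coeff n (F ^ k)
      = (k : R) * PowerSeries.coeff (n - k) (φ ^ n) :=
  stmt_3_general F φ G hF0 hG hFeq n k hkn
end

section
/- For integers m ≥ λ ≥ 0 and r ≥ 1, the cardinality of the top set T_{m,r}(λ) for the r-reduced affine rook-Brauer algebra equals C(m,λ) · ∑_{p=0}^{⌊(m-λ)/2⌋} C(m-λ, 2p)·(2p-1)!!·(2r-1)^p. -/
/-- A top diagram for the `r`-reduced affine rook-Brauer algebra on `m` points with `λ`
through lines: a set `through` of `λ` points carrying through lines, a partial matching of
the remaining points (an involution `σ` whose fixed points comprise `through` and the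
isolated points), and a displacement label in `{-(r-1), …, r-1}` for each matched pair. -/
structure AffineRookBrauerTop (m lam r : ℕ) where
  through : Finset (Fin m)
  σ : Fin m → Fin m
  δ : Fin m → ℤ
  card_through : through.card = lam
  invol : ∀ i, σ (σ i) = i
  through_fixed : ∀ i ∈ through, σ i = i
  skew : ∀ i, δ (σ i) = -δ i
  bound : ∀ i, -(r - 1 : ℤ) ≤ δ i ∧ δ i ≤ (r - 1 : ℤ)

/-!
Removing the through lines leaves, on the remaining `n = m - λ` points, an involution
together with a label `d ∈ {-(r-1), …, r-1}` on one end of each 2-cycle (the other end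
carries `-d`, and a fixed point is forced to carry `0`). Such labelled matchings on `n` points
are counted by conditioning on the partner of a chosen point `a`: either `a` is unmatched, or
it is matched with one of the `n - 1` other points `b` by one of `2r - 1` labels. Hence their
number `W n` satisfies `W (n + 1) = W n + (2r - 1) n W (n - 1)`, which is also the recurrence
of `∑ₚ C(n, 2p) (2p - 1)‼ (2r - 1)ᵖ` by Pascal's rule and
`(n + 1) C(n, 2p) = (2p + 1) C(n + 1, 2p + 1)`.
-/

open Finset
open scoped Nat

def labelledMatchingCount (q n : ℕ) : ℕ :=
  ∑ p ∈ range (n / 2 + 1), n.choose (2 * p) * (2 * p - 1)‼ * q ^ p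

lemma labelledMatchingCount_eq_sum_range (q n : ℕ) {K : ℕ} (hK : n / 2 < K) :
    labelledMatchingCount q n = ∑ p ∈ range K, n.choose (2 * p) * (2 * p - 1)‼ * q ^ p := by
  refine sum_subset (range_subset_range.2 hK) fun p _ hp => ?_
  rw [mem_range, not_lt] at hp
  rw [Nat.choose_eq_zero_of_lt (by omega), zero_mul, zero_mul]

lemma choose_add_two_mul_doubleFactorial (n p : ℕ) :
    (n + 2).choose (2 * p + 2) * (2 * p + 1)‼
      = (n + 1).choose (2 * p + 2) * (2 * p + 1)‼
        + (n + 1) * (n.choose (2 * p) * (2 * p - 1)‼) := by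
  rw [Nat.choose_succ_succ' (n + 1) (2 * p + 1), Nat.doubleFactorial_add_one,
    ← mul_assoc (n + 1), Nat.add_one_mul_choose_eq]
  ring

lemma labelledMatchingCount_succ (q n : ℕ) :
    labelledMatchingCount q (n + 1)
      = labelledMatchingCount q n + n * q * labelledMatchingCount q (n - 1) := by
  rcases n with _ | n
  · simp [labelledMatchingCount]
  rw [labelledMatchingCount_eq_sum_range q (n + 2) (K := n + 2) (by omega),
    labelledMatchingCount_eq_sum_range q (n + 1) (K := n + 2) (by omega), add_tsub_cancel_right,
    labelledMatchingCount_eq_sum_range q n (K := n + 1) (by omega),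
    sum_range_succ', sum_range_succ' _ (n + 1), mul_sum, add_right_comm, ← sum_add_distrib]
  congr 1
  refine sum_congr rfl fun p _ => ?_
  rw [Nat.mul_add_one 2 p, show 2 * p + 2 - 1 = 2 * p + 1 by omega,
    choose_add_two_mul_doubleFactorial]
  ring

@[ext]
structure LabelledMatching (α : Type*) (r : ℕ) where
  σ : α → α
  δ : α → ℤ
  invol : ∀ i, σ (σ i) = i
  skew : ∀ i, δ (σ i) = -δ i
  bound : ∀ i, -(r - 1 : ℤ) ≤ δ i ∧ δ i ≤ (r - 1 : ℤ)

namespace LabelledMatching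

abbrev Label (r : ℕ) : Type := Set.Icc (-(r - 1 : ℤ)) (r - 1)

lemma nat_card_label (r : ℕ) : Nat.card (Label r) = 2 * r - 1 := by
  rw [Nat.card_eq_fintype_card]
  simp only [Fintype.card_ofFinset, Int.card_Icc]
  omega

variable {α : Type*} {r : ℕ}

instance [Finite α] : Finite (LabelledMatching α r) :=
  Finite.of_injective
    (fun X : LabelledMatching α r => (X.σ, fun i => (⟨X.δ i, X.bound i⟩ : Label r)))
    fun X Y h => by
      simp only [Prod.mk.injEq, funext_iff, Subtype.ext_iff] at h
      exact LabelledMatching.ext (funext h.1) (funext h.2)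

instance [IsEmpty α] : Unique (LabelledMatching α r) where
  default := ⟨isEmptyElim, isEmptyElim, isEmptyElim, isEmptyElim, isEmptyElim⟩
  uniq _ := LabelledMatching.ext (funext isEmptyElim) (funext isEmptyElim)

lemma σ_injective (X : LabelledMatching α r) : Function.Injective X.σ :=
  Function.LeftInverse.injective X.invol

lemma σ_eq_comm (X : LabelledMatching α r) {i j : α} : X.σ i = j ↔ X.σ j = i := by
  constructor <;> rintro rfl <;> exact X.invol _

lemma δ_eq_zero_of_fixed (X : LabelledMatching α r) {i : α} (hi : X.σ i = i) : X.δ i = 0 := by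
  have := X.skew i
  rw [hi] at this
  omega

lemma σ_ne_of_fixed (Y : LabelledMatching α r) {a i : α} (ha : Y.σ a = a) (h : i ≠ a) :
    Y.σ i ≠ a := by
  rwa [Ne, ← ha, Y.σ_injective.eq_iff]

lemma σ_ne_of_σ_eq (X : LabelledMatching α r) {a b i : α} (hX : X.σ a = b)
    (h : ¬(i = a ∨ i = b)) : ¬(X.σ i = a ∨ X.σ i = b) := by
  have hσa : X.σ i = a ↔ i = b := by rw [X.σ_eq_comm, hX, eq_comm]
  have hσb : X.σ i = b ↔ i = a := by rw [← hX, X.σ_injective.eq_iff]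
  rwa [hσa, hσb, or_comm]

variable [DecidableEq α]

def fixingEquiv (hr : 1 ≤ r) (s : Finset α) :
    {X : LabelledMatching α r // ∀ i ∈ s, X.σ i = i} ≃
      LabelledMatching {i // i ∉ s} r where
  toFun X :=
    { σ := fun i => ⟨X.1.σ i, fun h => i.2 <| by
        have hi := X.2 _ h
        rw [X.1.invol] at hi
        rwa [← hi] at h⟩
      δ := fun i => X.1.δ i
      invol := fun i => Subtype.ext (X.1.invol i)
      skew := fun i => X.1.skew i
      bound := fun i => X.1.bound i }
  invFun Y :=
    ⟨{ σ := fun i => if h : i ∈ s then i else Y.σ ⟨i, h⟩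
       δ := fun i => if h : i ∈ s then 0 else Y.δ ⟨i, h⟩
       invol := fun i => by by_cases h : i ∈ s <;> simp [h, (Y.σ _).2, Y.invol]
       skew := fun i => by by_cases h : i ∈ s <;> simp [h, (Y.σ _).2, Y.skew]
       bound := fun i => by
         by_cases h : i ∈ s
         · simp [h]
           omega
         · simpa [h] using Y.bound _ },
     fun i h => by simp [h]⟩
  left_inv X := by
    ext i
    · by_cases h : i ∈ s <;> simp [h, X.2 i]
    · by_cases h : i ∈ s
      · simp [h, δ_eq_zero_of_fixed _ (X.2 i h)]
      · simp [h]
  right_inv Y := by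
    ext i <;> simp [i.2]

variable {a b : α}

def unpair (X : LabelledMatching α r) (hX : X.σ a = b) : LabelledMatching α r where
  σ i := if i = a ∨ i = b then i else X.σ i
  δ i := if i = a ∨ i = b then 0 else X.δ i
  invol i := by
    by_cases h : i = a ∨ i = b
    · simp only [h, if_true]
    · simp only [h, X.σ_ne_of_σ_eq hX h, if_false, X.invol]
  skew i := by
    by_cases h : i = a ∨ i = b
    · simp [h]
    · simp only [h, X.σ_ne_of_σ_eq hX h, if_false, X.skew]
  bound i := by
    by_cases h : i = a ∨ i = b
    · have := X.bound i
      simp only [h, if_true]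
      omega
    · simpa [h] using X.bound i

def pair (Y : LabelledMatching α r) (hab : a ≠ b) (ha : Y.σ a = a) (hb : Y.σ b = b)
    (d : Label r) : LabelledMatching α r where
  σ i := if i = a then b else if i = b then a else Y.σ i
  δ i := if i = a then d else if i = b then -d else Y.δ i
  invol i := by
    by_cases h : i = a ∨ i = b
    · rcases h with rfl | rfl <;> simp [hab.symm]
    · obtain ⟨hia, hib⟩ := not_or.1 h
      simp [hia, hib, Y.σ_ne_of_fixed ha hia, Y.σ_ne_of_fixed hb hib, Y.invol]
  skew i := by
    by_cases h : i = a ∨ i = b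
    · rcases h with rfl | rfl <;> simp [hab.symm]
    · obtain ⟨hia, hib⟩ := not_or.1 h
      simp [hia, hib, Y.σ_ne_of_fixed ha hia, Y.σ_ne_of_fixed hb hib, Y.skew]
  bound i := by
    by_cases h : i = a ∨ i = b
    · have := Set.mem_Icc.1 d.2
      rcases h with rfl | rfl <;> simp [hab.symm] <;> omega
    · obtain ⟨hia, hib⟩ := not_or.1 h
      simpa [hia, hib] using Y.bound i

def pairEquiv (hab : a ≠ b) :
    {X : LabelledMatching α r // X.σ a = b} ≃
      Label r × {Y : LabelledMatching α r // Y.σ a = a ∧ Y.σ b = b} where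
  toFun X := (⟨X.1.δ a, X.1.bound a⟩, ⟨X.1.unpair X.2, by simp [unpair]⟩)
  invFun Y := ⟨Y.2.1.pair hab Y.2.2.1 Y.2.2.2 Y.1, by simp [pair]⟩
  left_inv := by
    rintro ⟨X, hX⟩
    have hXb : X.σ b = a := by rw [← hX, X.invol]
    have hδb : X.δ b = -X.δ a := hX ▸ X.skew a
    ext i
    · by_cases h : i = a ∨ i = b
      · rcases h with rfl | rfl <;> simp [pair, hX, hXb]
      · simp [pair, unpair, not_or.1 h]
    · by_cases h : i = a ∨ i = b
      · rcases h with rfl | rfl <;> simp [pair, hab.symm, hδb]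
      · simp [pair, unpair, not_or.1 h]
  right_inv := by
    rintro ⟨d, Y, ha, hb⟩
    ext i
    · simp [pair]
    · by_cases h : i = a ∨ i = b
      · rcases h with rfl | rfl <;> simp [pair, unpair, ha, hb]
      · simp [pair, unpair, not_or.1 h]
    · by_cases h : i = a ∨ i = b
      · rcases h with rfl | rfl <;> simp [pair, unpair, Y.δ_eq_zero_of_fixed, ha, hb]
      · simp [pair, unpair, not_or.1 h]

lemma nat_card_eq_add_sum [Fintype α] (hr : 1 ≤ r) (a : α) :
    Nat.card (LabelledMatching α r)
      = Nat.card (LabelledMatching {i // i ∉ ({a} : Finset α)} r)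
        + ∑ b : {i // i ≠ a},
            (2 * r - 1) * Nat.card (LabelledMatching {i // i ∉ ({a, b.1} : Finset α)} r) := by
  rw [← Nat.card_congr (Equiv.sigmaFiberEquiv fun X : LabelledMatching α r => X.σ a),
    Nat.card_sigma, Fintype.sum_eq_add_sum_subtype_ne _ a]
  congr 1
  · exact Nat.card_congr ((Equiv.subtypeEquivRight (by simp)).trans (fixingEquiv hr _))
  · refine sum_congr rfl fun b _ => ?_
    rw [Nat.card_congr (pairEquiv (Ne.symm b.2)), Nat.card_prod, nat_card_label]
    exact congrArg _
      (Nat.card_congr ((Equiv.subtypeEquivRight (by simp)).trans (fixingEquiv hr _)))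

theorem nat_card_eq_labelledMatchingCount [Fintype α] (hr : 1 ≤ r) :
    Nat.card (LabelledMatching α r) = labelledMatchingCount (2 * r - 1) (Fintype.card α) := by
  induction hn : Fintype.card α using Nat.strong_induction_on generalizing α with
  | _ n ih =>
    rcases n with _ | n
    · have := Fintype.card_eq_zero_iff.1 hn
      simp [labelledMatchingCount]
    obtain ⟨a⟩ : Nonempty α := Fintype.card_pos_iff.1 (by omega)
    have hpair (b : {i // i ≠ a}) :
        Nat.card (LabelledMatching {i // i ∉ ({a, b.1} : Finset α)} r)
          = labelledMatchingCount (2 * r - 1) (n - 1) :=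
      ih (n - 1) (by omega) <| by
        rw [Fintype.card_subtype_compl, Fintype.card_coe, card_pair (Ne.symm b.2), hn]
        omega
    rw [nat_card_eq_add_sum hr a, ih n (by omega) (by simp [hn]), labelledMatchingCount_succ]
    simp only [hpair, sum_const, card_univ, smul_eq_mul]
    rw [show Fintype.card {i // i ≠ a} = n by simp [hn], mul_assoc]

end LabelledMatching

def AffineRookBrauerTop.equivSigma (m lam r : ℕ) :
    AffineRookBrauerTop m lam r ≃ Σ T : {s : Finset (Fin m) // s.card = lam},
      {X : LabelledMatching (Fin m) r // ∀ i ∈ T.1, X.σ i = i} where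
  toFun D := ⟨⟨D.through, D.card_through⟩,
    ⟨⟨D.σ, D.δ, D.invol, D.skew, D.bound⟩, D.through_fixed⟩⟩
  invFun := fun ⟨T, X, hX⟩ => ⟨T.1, X.σ, X.δ, T.2, X.invol, hX, X.skew, X.bound⟩
  left_inv _ := rfl
  right_inv _ := rfl

open Finset in
theorem stmt_5_general (m lam r : ℕ) (hr : 1 ≤ r) :
    Nat.card (AffineRookBrauerTop m lam r)
      = m.choose lam *
          ∑ p ∈ Finset.range ((m - lam) / 2 + 1),
            (m - lam).choose (2 * p) * Nat.doubleFactorial (2 * p - 1) * (2 * r - 1) ^ p := by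
  have hfiber (T : {s : Finset (Fin m) // s.card = lam}) :
      Nat.card {X : LabelledMatching (Fin m) r // ∀ i ∈ T.1, X.σ i = i}
        = labelledMatchingCount (2 * r - 1) (m - lam) := by
    rw [Nat.card_congr (LabelledMatching.fixingEquiv hr T.1),
      LabelledMatching.nat_card_eq_labelledMatchingCount hr]
    simp [Fintype.card_subtype_compl, T.2]
  rw [Nat.card_congr (AffineRookBrauerTop.equivSigma m lam r), Nat.card_sigma]
  simp only [hfiber, sum_const, card_univ, Fintype.card_finset_len, Fintype.card_fin, smul_eq_mul]
  rfl

open Finset in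
/-- The cardinality of the top set `T_{m,r}(λ)` for the `r`-reduced affine rook-Brauer
algebra is `C(m,λ) · ∑_{p=0}^{⌊(m-λ)/2⌋} C(m-λ, 2p)·(2p-1)!!·(2r-1)^p`. -/
theorem stmt_5 (m lam r : ℕ) (h : lam ≤ m) (hr : 1 ≤ r) :
    Nat.card (AffineRookBrauerTop m lam r)
      = m.choose lam *
          ∑ p ∈ Finset.range ((m - lam) / 2 + 1),
            (m - lam).choose (2 * p) * Nat.doubleFactorial (2 * p - 1) * (2 * r - 1) ^ p :=
  stmt_5_general m lam r hr
end

section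
/- For integers m ≥ 0, r ≥ 1 and λ ≥ 0, the number ∑_{t=λ}^{m} C(t,λ)·B_{m,t}(x_1,…,x_m), where x_s = r^s - (r-1)^s and B_{m,t} denotes the partial Bell polynomial, equals ∑_{t=0}^{m} C(t,λ) · ∑_{s=t}^{m} C(m,s)·S(s,t)·(t(r-1))^{m-s}, where S(s,t) is the Stirling number of the second kind and 0^0 = 1. -/
/-!
The exponential generating function of `x_s = b^s - (b-1)^s` is
`e^{bz} - e^{(b-1)z} = e^{(b-1)z} (e^z - 1)`, so `B_{m,t}/m!` is the `m`-th coefficient of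
`(1/t!) e^{(b-1)tz} (e^z - 1)^t`. Since `(e^z - 1)' = (e^z - 1) + 1`, differentiating
`(e^z - 1)^t` shows that `m! [z^m] (e^z - 1)^t / t!` obeys the recurrence of `S(m,t)`, and
multiplying by `e^{(b-1)tz}` is a binomial convolution. For `b = r` both sides of the
theorem then agree termwise, the terms with `t < λ` vanishing because `C(t,λ) = 0`.
-/

open PowerSeries Finset

/-- Stirling numbers of the second kind. -/
def stirling2 : ℕ → ℕ → ℕ
  | 0, 0 => 1
  | 0, _ + 1 => 0
  | _ + 1, 0 => 0
  | n + 1, k + 1 => (k + 1) * stirling2 n (k + 1) + stirling2 n k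

theorem stirling2_eq_stirlingSecond : ∀ n k, stirling2 n k = Nat.stirlingSecond n k
  | 0, 0 | 0, _ + 1 | _ + 1, 0 => rfl
  | n + 1, k + 1 => by
    rw [stirling2, Nat.stirlingSecond_succ_succ, stirling2_eq_stirlingSecond n (k + 1),
      stirling2_eq_stirlingSecond n k]

namespace PowerSeries

section

variable {A : Type*} [CommRing A] [Algebra ℚ A]

theorem derivative_exp_sub_one_pow (k : ℕ) :
    d⁄dX A ((exp A - 1) ^ (k + 1)) = (k + 1) • ((exp A - 1) ^ (k + 1) + (exp A - 1) ^ k) := by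
  rw [Derivation.leibniz_pow, map_sub, derivative_exp, Derivation.map_one_eq_zero, sub_zero,
    Nat.add_sub_cancel]
  congr 1
  ring

theorem coeff_exp_sub_one_pow_mul_factorial (n k : ℕ) :
    coeff n ((exp A - 1) ^ k) * n.factorial = ((k.factorial * n.stirlingSecond k : ℕ) : A) := by
  induction n generalizing k with
  | zero => cases k <;> simp [coeff_zero_eq_constantCoeff_apply]
  | succ n ih =>
    cases k with
    | zero => simp [coeff_one]
    | succ k =>
      have hstep := congrArg (coeff n) (derivative_exp_sub_one_pow (A := A) k)
      rw [coeff_derivative, map_nsmul, map_add, nsmul_eq_mul] at hstep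
      have h1 := ih (k + 1)
      have h0 := ih k
      rw [Nat.stirlingSecond_succ_succ]
      push_cast [Nat.factorial_succ] at h1 h0 hstep ⊢
      linear_combination (n.factorial : A) * hstep + ((k : A) + 1) * (h1 + h0)

theorem coeff_exp_mul_factorial (n : ℕ) : coeff n (exp A) * n.factorial = 1 := by
  rw [coeff_exp, ← map_natCast (algebraMap ℚ A), ← map_mul, one_div,
    inv_mul_cancel₀ (by exact_mod_cast n.factorial_ne_zero), map_one]

theorem rescale_exp_pow (a : A) (t : ℕ) : rescale a (exp A) ^ t = rescale (t * a) (exp A) := by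
  rw [← map_pow, exp_pow_eq_rescale_exp, rescale_rescale]

theorem coeff_rescale_exp_mul_exp_sub_one_pow_mul_factorial (c : A) (n t : ℕ) :
    coeff n (rescale c (exp A) * (exp A - 1) ^ t) * n.factorial =
      t.factorial * ∑ s ∈ Icc t n, (n.choose s : A) * s.stirlingSecond t * c ^ (n - s) := by
  have hvanish : ∀ s ∈ range (n + 1), s ∉ Icc t n →
      (n.choose s : A) * s.stirlingSecond t * c ^ (n - s) = 0 := by
    intro s hs hst
    have hst : s < t := by simp only [mem_range, mem_Icc] at hs hst; omega
    simp [Nat.stirlingSecond_eq_zero_of_lt hst]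
  rw [sum_subset (fun s hs => by simp only [mem_range, mem_Icc] at hs ⊢; omega) hvanish,
    mul_comm (rescale c _), coeff_mul, Nat.sum_antidiagonal_eq_sum_range_succ
      (fun i j => coeff i ((exp A - 1) ^ t) * coeff j (rescale c (exp A))), sum_mul, mul_sum]
  refine sum_congr rfl fun s hs => ?_
  have hfac : (n.factorial : A) = n.choose s * s.factorial * (n - s).factorial := by
    rw [← Nat.cast_mul, ← Nat.cast_mul,
      Nat.choose_mul_factorial_mul_factorial (mem_range_succ_iff.mp hs)]
  have hF := coeff_exp_sub_one_pow_mul_factorial (A := A) s t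
  have hE := coeff_exp_mul_factorial (A := A) (n - s)
  rw [coeff_rescale]
  push_cast at hF
  linear_combination (coeff s ((exp A - 1) ^ t) * c ^ (n - s) * coeff (n - s) (exp A)) * hfac
    + (n.choose s * c ^ (n - s) * coeff (n - s) (exp A) * (n - s).factorial : A) * hF
    + (n.choose s * t.factorial * s.stirlingSecond t * c ^ (n - s) : A) * hE

end

theorem mk_pow_sub_sub_one_pow_div_factorial {K : Type*} [Field K] [CharZero K] (b : K) :
    mk (fun s : ℕ => if s = 0 then 0 else (b ^ s - (b - 1) ^ s) / (s.factorial : K)) =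
      rescale (b - 1) (exp K) * (exp K - 1) := by
  have hshift : rescale (b - 1) (exp K) * exp K = rescale b (exp K) := by
    simpa [rescale_one] using exp_mul_exp_eq_exp_add (b - 1) (1 : K)
  rw [mul_sub, mul_one, hshift]
  ext (_ | n)
  · simp [coeff_rescale, -coeff_zero_eq_constantCoeff]
  · simp [coeff_exp, div_eq_mul_inv, sub_mul]

end PowerSeries

/-- Counting top sets for the `r`-reduced affine partition algebra:
`∑_{t=λ}^m C(t,λ)·B_{m,t}(x_1,…,x_m)` with `x_s = r^s - (r-1)^s` equals
`∑_{t=0}^m C(t,λ)·∑_{s=t}^m C(m,s)·S(s,t)·(t(r-1))^{m-s}` (with `0^0 = 1`).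
The partial Bell polynomials `B n t = B_{n,t}(x_1,x_2,…)` are encoded through their
defining exponential generating function
`(1/t!)·(∑_{s≥1} x_s z^s/s!)^t = ∑_n B_{n,t} z^n/n!`. -/
theorem stmt_6 (m r lam : ℕ) (hr : 1 ≤ r) (B : ℕ → ℕ → ℚ)
    (hB : ∀ t n : ℕ,
      B n t / (n.factorial : ℚ) =
        PowerSeries.coeff (R := ℚ) n
          (((t.factorial : ℚ)⁻¹ : ℚ) •
            (PowerSeries.mk (fun s : ℕ =>
              if s = 0 then 0
              else ((r : ℚ) ^ s - ((r : ℚ) - 1) ^ s) / (s.factorial : ℚ))) ^ t)) :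
    (∑ t ∈ Finset.Icc lam m, (t.choose lam : ℚ) * B m t)
      = ∑ t ∈ Finset.range (m + 1), (t.choose lam : ℚ) *
          ∑ s ∈ Finset.Icc t m,
            (m.choose s : ℚ) * (stirling2 s t : ℚ) * ((t * (r - 1) : ℕ) : ℚ) ^ (m - s) := by
  have hBell : ∀ t, B m t = ∑ s ∈ Icc t m,
      (m.choose s : ℚ) * (stirling2 s t : ℚ) * ((t * (r - 1) : ℕ) : ℚ) ^ (m - s) := by
    intro t
    have h := hB t m
    rw [mk_pow_sub_sub_one_pow_div_factorial, mul_pow, rescale_exp_pow, coeff_smul, smul_eq_mul,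
      div_eq_iff (by positivity)] at h
    rw [h, mul_assoc, coeff_rescale_exp_mul_exp_sub_one_pow_mul_factorial, ← mul_assoc,
      inv_mul_cancel₀ (by positivity), one_mul]
    simp only [stirling2_eq_stirlingSecond, Nat.cast_mul, Nat.cast_sub hr, Nat.cast_one]
  have hvanish : ∀ t ∈ range (m + 1), t ∉ Icc lam m → (t.choose lam : ℚ) * B m t = 0 := by
    intro t ht htl
    rw [Nat.choose_eq_zero_of_lt (by simp only [mem_range, mem_Icc] at ht htl; omega)]
    simp
  rw [sum_subset (fun t ht => by simp only [mem_range, mem_Icc] at ht ⊢; omega) hvanish]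
  simp only [hBell]
end

section
/- Let G be a group with a normal subgroup N of finite index, k an algebraically closed field, and V a simple kG-module. Then the restriction of V to N is semisimple and isomorphic to e·⊕_{i=1}^{t} U^{g_i}, a direct sum with uniform multiplicity e of the distinct G-conjugates of a simple kN-module U, where t = [G : I_G(U)] is the index of the inertia subgroup I_G(U) = {g ∈ G : U^g ≅ U}. -/
variable {k V G : Type*}

/-- A submodule invariant under the restriction of `ρ` to the subgroup `N`. -/
def IsInvt [Field k] [AddCommGroup V] [Module k V] [Group G]
    (ρ : Representation k G V) (N : Subgroup G) (W : Submodule k V) : Prop :=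
  ∀ n ∈ N, ∀ v ∈ W, ρ n v ∈ W

/-- Two submodules of `V` are isomorphic as `N`-modules: there is a `k`-linear equivalence
intertwining the action of every `n ∈ N`. -/
def NEquiv [Field k] [AddCommGroup V] [Module k V] [Group G]
    (ρ : Representation k G V) (N : Subgroup G) (A B : Submodule k V) : Prop :=
  ∃ f : A ≃ₗ[k] B, ∀ n ∈ N, ∀ (x : V) (hx : x ∈ A) (hnx : ρ n x ∈ A),
    (f ⟨ρ n x, hnx⟩ : V) = ρ n (f ⟨x, hx⟩)


/-!
Take a minimal nonzero `N`-invariant subspace `U`. As `N` is normal, every translate `ρ g • U` is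
again `N`-simple, and the sum of all translates is `G`-invariant, hence equal to `V`; so `V` is the
direct sum of finitely many translates. For an `N`-simple `T`, the `N`-equivariant projections onto
the summands together with Schur's lemma put `T` inside the sum of the summands isomorphic to `T`.
Consequently `ρ g` maps the summands isomorphic to `T` into the sum of those isomorphic to
`ρ g • T`, and comparing dimensions shows that all conjugates of `U` occur with the same
multiplicity `e`. The `t` isomorphism classes of the summands are represented by conjugates of `U`.
-/

namespace DirectSum.IsInternal

variable {R M ι : Type*} [Ring R] [AddCommGroup M] [Module R M] [DecidableEq ι]
  {S : ι → Submodule R M}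

lemma comp_equiv {ι' : Type*} [DecidableEq ι'] (h : IsInternal S) (e : ι' ≃ ι) :
    IsInternal (S ∘ e) :=
  (isInternal_submodule_iff_iSupIndep_and_iSup_eq_top _).2
    ⟨h.submodule_iSupIndep.comp e.injective,
      (e.iSup_comp (g := S)).trans h.submodule_iSup_eq_top⟩

variable (h : IsInternal S)

noncomputable def proj (i : ι) : M →ₗ[R] M :=
  (S i).subtype ∘ₗ component R ι (fun i => S i) i ∘ₗ
    (LinearEquiv.ofBijective (coeLinearMap S) h).symm.toLinearMap

lemma proj_apply_mem (i : ι) (v : M) : h.proj i v ∈ S i := Submodule.coe_mem _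

lemma proj_apply_of_mem {i : ι} {v : M} (hv : v ∈ S i) : h.proj i v = v := by
  simp [proj, ← apply_eq_component, h.ofBijective_coeLinearMap_of_mem hv]

lemma proj_apply_of_mem_ne {i j : ι} (hij : j ≠ i) {v : M} (hv : v ∈ S j) :
    h.proj i v = 0 := by
  simp [proj, ← apply_eq_component, h.ofBijective_coeLinearMap_of_mem_ne hij hv]

lemma sum_proj_apply [Fintype ι] (v : M) : ∑ i, h.proj i v = v := by
  refine Submodule.iSup_induction S (motive := fun v => ∑ i, h.proj i v = v)
    (h.submodule_iSup_eq_top ▸ Submodule.mem_top) (fun j v hv => ?_) (by simp) ?_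
  · rw [Finset.sum_eq_single j (fun i _ hij => h.proj_apply_of_mem_ne hij.symm hv) (by simp),
      h.proj_apply_of_mem hv]
  · intro v w hv hw
    simp only [map_add, Finset.sum_add_distrib, hv, hw]

lemma proj_apply_map_of_mapsTo {T : M →ₗ[R] M} (hT : ∀ i, ∀ v ∈ S i, T v ∈ S i) (i : ι)
    (v : M) : h.proj i (T v) = T (h.proj i v) := by
  refine Submodule.iSup_induction S (motive := fun v => h.proj i (T v) = T (h.proj i v))
    (h.submodule_iSup_eq_top ▸ Submodule.mem_top) (fun j v hv => ?_) (by simp) ?_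
  · by_cases hij : j = i
    · subst hij
      rw [h.proj_apply_of_mem hv, h.proj_apply_of_mem (hT j v hv)]
    · rw [h.proj_apply_of_mem_ne hij hv, h.proj_apply_of_mem_ne hij (hT j v hv), map_zero]
  · intro v w hv hw
    simp only [map_add, hv, hw]

end DirectSum.IsInternal

lemma Submodule.finrank_iSup_eq_sum_of_iSupIndep {K M ι : Type*} [DivisionRing K]
    [AddCommGroup M] [Module K M] [FiniteDimensional K M] [Fintype ι] {S : ι → Submodule K M}
    (h : iSupIndep S) : Module.finrank K ↥(⨆ i, S i) = ∑ i, Module.finrank K (S i) := by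
  classical
  rw [← DirectSum.range_coeLinearMap,
    LinearMap.finrank_range_of_inj (f := DirectSum.coeLinearMap S) h.dfinsupp_lsum_injective,
    Module.finrank_directSum]

lemma exists_equiv_prod_of_card_fiber {ι β : Type*} [Finite ι] (c : ι → β) {e : ℕ}
    (h : ∀ b, Nat.card {a // c a = b} = e) : ∃ τ : β × Fin e ≃ ι, ∀ q, c (τ q) = q.1 :=
  ⟨(Equiv.sigmaEquivProd β (Fin e)).symm.trans <|
      (Equiv.sigmaCongrRight fun b => ((Finite.equivFin _).trans (finCongr (h b))).symm).trans
        (Equiv.sigmaFiberEquiv c),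
    fun q => ((Finite.equivFin {a // c a = q.1}).symm _).2⟩

section Representation

variable [Field k] [AddCommGroup V] [Module k V] [Group G]
  {ρ : Representation k G V} {N : Subgroup G}

def rhoEquiv (ρ : Representation k G V) (g : G) : V ≃ₗ[k] V :=
  .ofLinearMap (ρ g) (ρ g⁻¹) (by ext; simp) (by ext; simp)

lemma finrank_map_rho (A : Submodule k V) (g : G) :
    Module.finrank k (A.map (ρ g)) = Module.finrank k A :=
  LinearEquiv.finrank_map_eq (rhoEquiv ρ g) A

lemma map_rho_map_rho (A : Submodule k V) (g h : G) :
    (A.map (ρ h)).map (ρ g) = A.map (ρ (g * h)) := by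
  rw [← Submodule.map_comp, ← Module.End.mul_eq_comp, ← map_mul]

lemma map_rho_one (A : Submodule k V) : A.map (ρ 1) = A := by
  rw [map_one, Module.End.one_eq_id, Submodule.map_id]

lemma map_rho_inv_map_rho (A : Submodule k V) (g : G) : (A.map (ρ g)).map (ρ g⁻¹) = A := by
  rw [map_rho_map_rho, inv_mul_cancel, map_rho_one]

lemma map_rho_map_rho_inv (A : Submodule k V) (g : G) : (A.map (ρ g⁻¹)).map (ρ g) = A := by
  rw [map_rho_map_rho, mul_inv_cancel, map_rho_one]

lemma rho_conj_apply (g n : G) (v : V) : ρ (g⁻¹ * n * g) v = ρ g⁻¹ (ρ n (ρ g v)) := by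
  simp only [map_mul, Module.End.mul_apply]

variable {A B C : Submodule k V}

lemma IsInvt.map_rho [N.Normal] (hA : IsInvt ρ N A) (g : G) : IsInvt ρ N (A.map (ρ g)) := by
  rintro n hn _ ⟨a, ha, rfl⟩
  refine ⟨ρ (g⁻¹ * n * g) a, hA _ (Subgroup.Normal.conj_mem' inferInstance n hn g) a ha, ?_⟩
  simp only [rho_conj_apply, ρ.self_inv_apply]

lemma IsInvt.inf (hA : IsInvt ρ N A) (hB : IsInvt ρ N B) : IsInvt ρ N (A ⊓ B) :=
  fun n hn v hv => ⟨hA n hn v hv.1, hB n hn v hv.2⟩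

lemma IsInvt.iSup {ι : Sort*} {F : ι → Submodule k V} (hF : ∀ i, IsInvt ρ N (F i)) :
    IsInvt ρ N (⨆ i, F i) := fun n hn v hv =>
  Submodule.iSup_induction F (motive := fun v => ρ n v ∈ ⨆ i, F i) hv
    (fun i v hv => Submodule.mem_iSup_of_mem i (hF i n hn v hv)) (by simp)
    (fun v w hv hw => by simpa only [map_add] using add_mem hv hw)

lemma IsInvt.sSup {s : Set (Submodule k V)} (hs : ∀ A ∈ s, IsInvt ρ N A) :
    IsInvt ρ N (sSup s) :=
  sSup_eq_iSup' s ▸ IsInvt.iSup fun A => hs A A.2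

lemma IsInvt.map_of_commute (hA : IsInvt ρ N A) {φ : V →ₗ[k] V}
    (hφ : ∀ n ∈ N, ∀ v, φ (ρ n v) = ρ n (φ v)) : IsInvt ρ N (A.map φ) := by
  rintro n hn _ ⟨a, ha, rfl⟩
  exact ⟨ρ n a, hA n hn a ha, hφ n hn a⟩

lemma IsInvt.inf_ker_of_commute (hA : IsInvt ρ N A) {φ : V →ₗ[k] V}
    (hφ : ∀ n ∈ N, ∀ v, φ (ρ n v) = ρ n (φ v)) : IsInvt ρ N (A ⊓ LinearMap.ker φ) :=
  hA.inf fun n hn v (hv : φ v = 0) => show φ (ρ n v) = 0 by rw [hφ n hn, hv, map_zero]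

variable (ρ N) in
structure IsSimpleInvt (U : Submodule k V) : Prop where
  invt : IsInvt ρ N U
  ne_bot : U ≠ ⊥
  eq_bot_or_eq : ∀ W ≤ U, IsInvt ρ N W → W = ⊥ ∨ W = U

lemma IsSimpleInvt.map_rho [N.Normal] {U : Submodule k V} (hU : IsSimpleInvt ρ N U) (g : G) :
    IsSimpleInvt ρ N (U.map (ρ g)) where
  invt := hU.invt.map_rho g
  ne_bot h := hU.ne_bot <| by rw [← map_rho_inv_map_rho U g, h, Submodule.map_bot]
  eq_bot_or_eq W hW hWinvt := by
    have hle : W.map (ρ g⁻¹) ≤ U := by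
      simpa only [map_rho_inv_map_rho] using Submodule.map_mono (f := ρ g⁻¹) hW
    rw [← map_rho_map_rho_inv W g]
    rcases hU.eq_bot_or_eq _ hle (hWinvt.map_rho g⁻¹) with h | h
    · exact .inl (by rw [h, Submodule.map_bot])
    · exact .inr (by rw [h])

lemma NEquiv.refl : NEquiv ρ N A A :=
  ⟨LinearEquiv.refl k A, fun _ _ _ _ _ => rfl⟩

lemma NEquiv.symm (hA : IsInvt ρ N A) : NEquiv ρ N A B → NEquiv ρ N B A := by
  rintro ⟨f, hf⟩
  refine ⟨f.symm, fun n hn y hy hny => ?_⟩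
  set x := f.symm ⟨y, hy⟩
  have : f.symm ⟨ρ n y, hny⟩ = ⟨ρ n x, hA n hn x x.2⟩ := by
    rw [f.symm_apply_eq]
    ext
    rw [hf n hn x x.2, Subtype.coe_eta, LinearEquiv.apply_symm_apply]
  rw [this]

lemma NEquiv.trans (hB : IsInvt ρ N B) : NEquiv ρ N A B → NEquiv ρ N B C → NEquiv ρ N A C := by
  rintro ⟨f, hf⟩ ⟨g, hg⟩
  refine ⟨f.trans g, fun n hn x hx hnx => ?_⟩
  set y := f ⟨x, hx⟩
  have : f ⟨ρ n x, hnx⟩ = ⟨ρ n y, hB n hn y y.2⟩ := Subtype.ext (hf n hn x hx hnx)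
  simp only [LinearEquiv.trans_apply, this, hg n hn y y.2, Subtype.coe_eta, y]

lemma NEquiv.map_rho [N.Normal] (h : NEquiv ρ N A B) (g : G) :
    NEquiv ρ N (A.map (ρ g)) (B.map (ρ g)) := by
  obtain ⟨f, hf⟩ := h
  let e := rhoEquiv ρ g
  refine ⟨(e.submoduleMap A).symm.trans (f.trans (e.submoduleMap B)), fun n hn x hx hnx => ?_⟩
  have hm : g⁻¹ * n * g ∈ N := Subgroup.Normal.conj_mem' inferInstance n hn g
  have hx' : ρ g⁻¹ x ∈ A := ((e.submoduleMap A).symm ⟨x, hx⟩).2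
  have hconj : ρ g⁻¹ (ρ n x) = ρ (g⁻¹ * n * g) (ρ g⁻¹ x) := by
    simp only [rho_conj_apply, ρ.self_inv_apply]
  have hnx' : ρ (g⁻¹ * n * g) (ρ g⁻¹ x) ∈ A := hconj ▸ ((e.submoduleMap A).symm ⟨_, hnx⟩).2
  have hsymm : (e.submoduleMap A).symm ⟨ρ n x, hnx⟩ = ⟨ρ (g⁻¹ * n * g) (ρ g⁻¹ x), hnx'⟩ :=
    Subtype.ext hconj
  change ρ g (f ((e.submoduleMap A).symm ⟨ρ n x, hnx⟩)) = ρ n (ρ g (f ⟨ρ g⁻¹ x, hx'⟩))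
  rw [hsymm, hf _ hm _ hx' hnx', rho_conj_apply, ρ.self_inv_apply]

lemma IsSimpleInvt.map_eq_bot_or_nequiv (hA : IsSimpleInvt ρ N A) (hB : IsSimpleInvt ρ N B)
    {φ : V →ₗ[k] V} (hφ : ∀ n ∈ N, ∀ v, φ (ρ n v) = ρ n (φ v)) (hAB : A.map φ ≤ B) :
    A.map φ = ⊥ ∨ NEquiv ρ N A B := by
  rcases hB.eq_bot_or_eq _ hAB (hA.invt.map_of_commute hφ) with hbot | hmap
  · exact .inl hbot
  rcases hA.eq_bot_or_eq _ inf_le_left (hA.invt.inf_ker_of_commute hφ) with hker | hker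
  · have hinj : Function.Injective (φ.domRestrict A) :=
      LinearMap.injective_domRestrict_iff.2 (disjoint_iff.2 hker)
    exact .inr ⟨(LinearEquiv.ofInjective _ hinj).trans
      (LinearEquiv.ofEq _ _ ((LinearMap.range_domRestrict A φ).trans hmap)),
      fun n hn x _ _ => hφ n hn x⟩
  · exact .inl (LinearMap.le_ker_iff_map.1 (hker ▸ inf_le_right))

variable (ρ N) in
lemma exists_isSimpleInvt [FiniteDimensional k V] [Nontrivial V] :
    ∃ U : Submodule k V, IsSimpleInvt ρ N U := by
  obtain ⟨U, ⟨hinvt, hne⟩, hmin⟩ :=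
    wellFounded_lt.has_min {A : Submodule k V | IsInvt ρ N A ∧ A ≠ ⊥}
      ⟨⊤, fun _ _ _ _ => trivial, top_ne_bot⟩
  exact ⟨U, hinvt, hne, fun W hW hWinvt => or_iff_not_imp_left.2 fun hWne =>
    eq_of_le_of_not_lt hW (hmin W ⟨hWinvt, hWne⟩)⟩

lemma iSup_map_rho_eq_top {U : Submodule k V} (hU : U ≠ ⊥)
    (hsimple : ∀ W : Submodule k V, (∀ g : G, ∀ v ∈ W, ρ g v ∈ W) → W = ⊥ ∨ W = ⊤) :
    ⨆ g, U.map (ρ g) = ⊤ := by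
  refine (hsimple _ fun h v hv => ?_).resolve_left fun hbot => hU ?_
  · have : (⨆ g, U.map (ρ g)).map (ρ h) ≤ ⨆ g, U.map (ρ g) := by
      rw [Submodule.map_iSup]
      exact iSup_le fun g =>
        (map_rho_map_rho U h g).trans_le (le_iSup (fun g => U.map (ρ g)) (h * g))
    exact this ⟨v, hv, rfl⟩
  · rw [eq_bot_iff, ← hbot]
    exact (map_rho_one U).symm.trans_le (le_iSup (fun g => U.map (ρ g)) 1)

/- A subfamily of `s` that is minimal among those spanning `V` is independent: a member meeting
the span of the others is, being simple, contained in it and could be dropped. -/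
lemma exists_finset_isInternal [FiniteDimensional k V] {s : Set (Submodule k V)}
    (hs : ∀ A ∈ s, IsSimpleInvt ρ N A) (htop : sSup s = ⊤) :
    ∃ K : Finset (Submodule k V), ↑K ⊆ s ∧
      DirectSum.IsInternal fun A : K => (A : Submodule k V) := by
  classical
  obtain ⟨t, hts, ht⟩ := CompleteLattice.WellFoundedGT.isSupFiniteCompact (Submodule k V) s
  obtain ⟨K, hK, hKmin⟩ := Finset.exists_minimal
    (s := t.powerset.filter fun K : Finset (Submodule k V) => sSup (K : Set (Submodule k V)) = ⊤)
    ⟨t, by simpa [← Finset.sup_id_eq_sSup, ← ht] using htop⟩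
  simp only [Finset.mem_filter, Finset.mem_powerset] at hK hKmin
  obtain ⟨hKt, hKtop⟩ := hK
  have hKs : ↑K ⊆ s := (Finset.coe_subset.2 hKt).trans hts
  have hindep : sSupIndep (K : Set (Submodule k V)) := by
    intro A hA
    have hAs := hs A (hKs hA)
    have hrest : IsInvt ρ N (sSup (↑K \ {A})) := IsInvt.sSup fun B hB => (hs B (hKs hB.1)).invt
    refine disjoint_iff.2 ((hAs.eq_bot_or_eq _ inf_le_left (hAs.invt.inf hrest)).resolve_right
      fun hle => ?_)
    have htop' : sSup (↑(K.erase A) : Set (Submodule k V)) = ⊤ := by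
      rw [← hKtop, Finset.coe_erase, ← sSup_insert.trans (sup_eq_right.2 (inf_eq_left.1 hle)),
        Set.insert_sdiff_singleton, Set.insert_eq_of_mem hA]
    exact (Finset.erase_ssubset hA).not_subset
      (hKmin ⟨(Finset.erase_subset A K).trans hKt, htop'⟩ (Finset.erase_subset A K))
  exact ⟨K, hKs, DirectSum.isInternal_submodule_of_iSupIndep_of_iSup_eq_top
    ((sSupIndep_iff _).1 hindep) ((sSup_eq_iSup' _).symm.trans hKtop)⟩

lemma exists_isInternal_map_rho [N.Normal] [FiniteDimensional k V] {U : Submodule k V}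
    (hU : IsSimpleInvt ρ N U)
    (hsimple : ∀ W : Submodule k V, (∀ g : G, ∀ v ∈ W, ρ g v ∈ W) → W = ⊥ ∨ W = ⊤) :
    ∃ (K : Finset (Submodule k V)) (x : K → G), DirectSum.IsInternal fun a => U.map (ρ (x a)) := by
  obtain ⟨K, hK, hint⟩ := exists_finset_isInternal (s := Set.range fun g => U.map (ρ g))
    (by rintro _ ⟨g, rfl⟩; exact hU.map_rho g)
    (by rw [sSup_range]; exact iSup_map_rho_eq_top hU.ne_bot hsimple)
  choose x hx using fun a : K => hK a.2
  exact ⟨K, x, by simpa only [hx] using hint⟩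

variable (ρ N) in
def nequivSetoid {ι : Type*} (S : ι → Submodule k V) (hS : ∀ a, IsInvt ρ N (S a)) : Setoid ι where
  r a b := NEquiv ρ N (S a) (S b)
  iseqv := ⟨fun _ => .refl, fun h => h.symm (hS _), fun h h' => h.trans (hS _) h'⟩

variable (ρ N) in
noncomputable def isotypicMult {ι : Type*} (S : ι → Submodule k V) (T : Submodule k V) : ℕ :=
  Nat.card {a // NEquiv ρ N (S a) T}

variable {ι : Type*} [Fintype ι] {S : ι → Submodule k V}

lemma finrank_iSup_nequiv [FiniteDimensional k V] (hS : iSupIndep S) (T : Submodule k V) :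
    Module.finrank k ↥(⨆ a : {a // NEquiv ρ N (S a) T}, S a) =
      isotypicMult ρ N S T * Module.finrank k T := by
  classical
  rw [Submodule.finrank_iSup_eq_sum_of_iSupIndep (S := fun a : {a // NEquiv ρ N (S a) T} => S a)
      (hS.comp Subtype.val_injective),
    Finset.sum_congr rfl fun a _ => a.2.choose.finrank_eq, Finset.sum_const, smul_eq_mul,
    Finset.card_univ, isotypicMult, Nat.card_eq_fintype_card]

variable [DecidableEq ι]

lemma le_iSup_nequiv (hS : DirectSum.IsInternal S) (hSs : ∀ a, IsSimpleInvt ρ N (S a))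
    {T : Submodule k V} (hT : IsSimpleInvt ρ N T) (hTB : NEquiv ρ N T B) :
    T ≤ ⨆ a : {a // NEquiv ρ N (S a) B}, S a := by
  intro v hv
  rw [← hS.sum_proj_apply v]
  refine Submodule.sum_mem _ fun a _ => ?_
  have hcomm : ∀ n ∈ N, ∀ w, hS.proj a (ρ n w) = ρ n (hS.proj a w) := fun n hn =>
    hS.proj_apply_map_of_mapsTo (fun b => (hSs b).invt n hn) a
  rcases hT.map_eq_bot_or_nequiv (hSs a) hcomm
      (Submodule.map_le_iff_le_comap.2 fun w _ => hS.proj_apply_mem a w) with hbot | hTa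
  · rw [(Submodule.eq_bot_iff _).1 hbot _ ⟨v, hv, rfl⟩]
    exact zero_mem _
  · exact Submodule.mem_iSup_of_mem ⟨a, (hTa.symm hT.invt).trans hT.invt hTB⟩
      (hS.proj_apply_mem a v)

lemma exists_nequiv (hS : DirectSum.IsInternal S) (hSs : ∀ a, IsSimpleInvt ρ N (S a))
    {T : Submodule k V} (hT : IsSimpleInvt ρ N T) : ∃ a, NEquiv ρ N (S a) T := by
  by_contra! h
  have : IsEmpty {a // NEquiv ρ N (S a) T} := ⟨fun a => h a.1 a.2⟩
  exact hT.ne_bot <| le_bot_iff.1 <|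
    (le_iSup_nequiv hS hSs hT .refl).trans_eq (iSup_of_empty _)

lemma isotypicMult_le_map_rho [N.Normal] [FiniteDimensional k V] (hS : DirectSum.IsInternal S)
    (hSs : ∀ a, IsSimpleInvt ρ N (S a)) {T : Submodule k V} (hT : IsSimpleInvt ρ N T) (g : G) :
    isotypicMult ρ N S T ≤ isotypicMult ρ N S (T.map (ρ g)) := by
  have hmap : (⨆ a : {a // NEquiv ρ N (S a) T}, S a).map (ρ g) ≤
      ⨆ a : {a // NEquiv ρ N (S a) (T.map (ρ g))}, S a := by
    rw [Submodule.map_iSup]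
    exact iSup_le fun a => le_iSup_nequiv hS hSs ((hSs a).map_rho g) (a.2.map_rho g)
  have hd : 0 < Module.finrank k T :=
    Module.finrank_pos_iff.2 (Submodule.nontrivial_iff_ne_bot.2 hT.ne_bot)
  have := (finrank_map_rho (ρ := ρ) _ g).symm.trans_le (Submodule.finrank_mono hmap)
  rw [finrank_iSup_nequiv hS.submodule_iSupIndep, finrank_iSup_nequiv hS.submodule_iSupIndep,
    finrank_map_rho] at this
  exact Nat.le_of_mul_le_mul_right this hd

lemma isotypicMult_map_rho [N.Normal] [FiniteDimensional k V] (hS : DirectSum.IsInternal S)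
    (hSs : ∀ a, IsSimpleInvt ρ N (S a)) {T : Submodule k V} (hT : IsSimpleInvt ρ N T) (g : G) :
    isotypicMult ρ N S (T.map (ρ g)) = isotypicMult ρ N S T := by
  refine le_antisymm ?_ (isotypicMult_le_map_rho hS hSs hT g)
  simpa only [map_rho_inv_map_rho] using isotypicMult_le_map_rho hS hSs (hT.map_rho g) g⁻¹

end Representation

theorem stmt_10_general [Field k] [Group G] (N : Subgroup G) [N.Normal]
    [AddCommGroup V] [Module k V] [FiniteDimensional k V] [Nontrivial V]
    (ρ : Representation k G V)
    (hsimple : ∀ W : Submodule k V, (∀ g : G, ∀ v ∈ W, ρ g v ∈ W) → W = ⊥ ∨ W = ⊤) :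
    ∃ (U : Submodule k V) (t e : ℕ) (g : Fin t → G)
      (W : Fin t → Fin e → Submodule k V),
      0 < t ∧ 0 < e ∧
      IsInvt ρ N U ∧ U ≠ ⊥ ∧
      (∀ U' : Submodule k V, U' ≤ U → IsInvt ρ N U' → U' = ⊥ ∨ U' = U) ∧
      (∀ i j : Fin t, i ≠ j → ¬NEquiv ρ N (U.map (ρ (g i))) (U.map (ρ (g j)))) ∧
      (∀ x : G, ∃ i : Fin t, NEquiv ρ N (U.map (ρ x)) (U.map (ρ (g i)))) ∧
      (∀ i j, IsInvt ρ N (W i j)) ∧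
      (∀ i j, NEquiv ρ N (W i j) (U.map (ρ (g i)))) ∧
      DirectSum.IsInternal (fun q : Fin t × Fin e => W q.1 q.2) := by
  classical
  obtain ⟨U, hU⟩ := exists_isSimpleInvt ρ N
  obtain ⟨K, x, hS⟩ := exists_isInternal_map_rho hU hsimple
  set S := fun a : K => U.map (ρ (x a))
  have hSs : ∀ a, IsSimpleInvt ρ N (S a) := fun a => hU.map_rho (x a)
  let σ := Finite.equivFin (Quotient (nequivSetoid ρ N S fun a => (hSs a).invt))
  let g i := x (σ.symm i).out
  have hclass : ∀ a i, σ ⟦a⟧ = i ↔ NEquiv ρ N (S a) (U.map (ρ (g i))) := fun a i => by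
    rw [← σ.eq_symm_apply, ← Quotient.out_eq (σ.symm i), Quotient.eq]
    rfl
  obtain ⟨a₀, ha₀⟩ := exists_nequiv hS hSs hU
  have hmult : ∀ i, Nat.card {a // σ ⟦a⟧ = i} = isotypicMult ρ N S U := fun i => by
    rw [← isotypicMult_map_rho hS hSs hU (g i)]
    exact Nat.card_congr (Equiv.subtypeEquivRight fun a => hclass a i)
  obtain ⟨τ, hτ⟩ := exists_equiv_prod_of_card_fiber _ hmult
  refine ⟨U, _, _, g, fun i j => S (τ (i, j)), Fin.pos_iff_nonempty.2 ⟨σ ⟦a₀⟧⟩,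
    Nat.card_pos_iff.2 ⟨⟨a₀, ha₀⟩, inferInstance⟩, hU.invt, hU.ne_bot, hU.eq_bot_or_eq,
    fun i j hij hg => hij ?_, fun y => ?_, fun _ _ => (hSs _).invt,
    fun i j => (hclass _ i).1 (hτ (i, j)), hS.comp_equiv τ⟩
  · rw [← (hclass (σ.symm i).out j).2 hg, Quotient.out_eq, σ.apply_symm_apply]
  · obtain ⟨a, ha⟩ := exists_nequiv hS hSs (hU.map_rho y)
    exact ⟨σ ⟦a⟧, (ha.symm (hSs a).invt).trans (hSs a).invt ((hclass a _).1 rfl)⟩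

/-- **Clifford's theorem.**  Let `G` be a group, `N` a normal subgroup of finite index,
`k` an algebraically closed field, and `V` a (finite-dimensional, nonzero) simple
`kG`-module.  Then the restriction of `V` to `N` is semisimple: `V` is an internal direct
sum of `N`-submodules `W i j` (`i < t`, `j < e`), where `W i j` is `N`-isomorphic to the
conjugate `ρ(g i)·U` of a simple `N`-submodule `U`; the conjugates `ρ(g i)·U` are pairwise
non-isomorphic and every `G`-conjugate of `U` is isomorphic to one of them, so that
`t = [G : I_G(U)]` is the index of the inertia subgroup of `U`. -/
theorem stmt_10 [Field k] [IsAlgClosed k] [Group G] (N : Subgroup G) [N.Normal]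
    (hNfi : N.FiniteIndex)
    [AddCommGroup V] [Module k V] [FiniteDimensional k V] [Nontrivial V]
    (ρ : Representation k G V)
    (hsimple : ∀ W : Submodule k V, (∀ g : G, ∀ v ∈ W, ρ g v ∈ W) → W = ⊥ ∨ W = ⊤) :
    ∃ (U : Submodule k V) (t e : ℕ) (g : Fin t → G)
      (W : Fin t → Fin e → Submodule k V),
      0 < t ∧ 0 < e ∧
      IsInvt ρ N U ∧ U ≠ ⊥ ∧
      (∀ U' : Submodule k V, U' ≤ U → IsInvt ρ N U' → U' = ⊥ ∨ U' = U) ∧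
      (∀ i j : Fin t, i ≠ j → ¬NEquiv ρ N (U.map (ρ (g i))) (U.map (ρ (g j)))) ∧
      (∀ x : G, ∃ i : Fin t, NEquiv ρ N (U.map (ρ x)) (U.map (ρ (g i)))) ∧
      (∀ i j, IsInvt ρ N (W i j)) ∧
      (∀ i j, NEquiv ρ N (W i j) (U.map (ρ (g i)))) ∧
      DirectSum.IsInternal (fun q : Fin t × Fin e => W q.1 q.2) :=
  stmt_10_general N ρ hsimple
end

section
/- Let S be a semigroup (without unit), k a field, X ⊆ S a finite set such that every element of S can be written as a word ending in some x ∈ X, and V a kS-module on which no element of S acts invertibly. Then V^{⊗|X|} has a nonzero submodule annihilated by all of S. -/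
open scoped TensorProduct

/-- Let `S` be a semigroup (without unit), `k` a field, `X ⊆ S` a finite set such that
every element of `S` is a word ending in some `x ∈ X`, and `V` a (finite-dimensional,
nonzero) `kS`-module on which no element of `S` acts invertibly.  Then the `|X|`-th
tensor power of `V` has a nonzero submodule annihilated by all of `S`. -/
theorem stmt_19 (k : Type*) [Field k] (S : Type*) [Semigroup S]
    (V : Type*) [AddCommGroup V] [Module k V] [FiniteDimensional k V] [Nontrivial V]
    (ρ : S →ₙ* Module.End k V)
    (X : Finset S)
    (hX : ∀ s : S, ∃ x ∈ X, s = x ∨ ∃ s' : S, s = s' * x)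
    (hV : ∀ s : S, ¬Function.Bijective (ρ s))
    (ρn : S →ₙ* Module.End k (⨂[k]^(X.card) V))
    (hρn : ∀ (s : S) (v : Fin X.card → V),
      ρn s (PiTensorProduct.tprod k v) = PiTensorProduct.tprod k (fun i => ρ s (v i))) :
    ∃ N : Submodule k (⨂[k]^(X.card) V), N ≠ ⊥ ∧
      ∀ s : S, ∀ w ∈ N, ρn s w = 0 := by
  classical
  -- for each i, pick x i ∈ X and nonzero v i killed by ρ (x i)
  let xs : Fin X.card → S := fun i => (X.equivFin.symm i : S)
  have hxs_mem : ∀ i, xs i ∈ X := fun i => (X.equivFin.symm i).2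
  have hker : ∀ i, ∃ v : V, v ≠ 0 ∧ ρ (xs i) v = 0 := by
    intro i
    have hni : ¬Function.Injective (ρ (xs i)) := by
      intro h
      exact hV (xs i) ⟨h, (LinearMap.injective_iff_surjective).mp h⟩
    rw [← LinearMap.ker_eq_bot] at hni
    obtain ⟨v, hv, hv0⟩ := Submodule.exists_mem_ne_zero_of_ne_bot hni
    exact ⟨v, hv0, hv⟩
  choose v hv0 hvker using hker
  refine ⟨Submodule.span k {PiTensorProduct.tprod k v}, ?_, ?_⟩
  · -- nonzero: build a functional separating it
    have hf : ∀ i, ∃ f : Module.Dual k V, f (v i) = 1 := by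
      intro i
      have := (Module.forall_dual_apply_eq_zero_iff k (v i)).not.mpr (hv0 i)
      push_neg at this
      obtain ⟨φ, hφ⟩ := this
      exact ⟨(φ (v i))⁻¹ • φ, by simp [inv_mul_cancel₀ hφ]⟩
    choose f hf1 using hf
    set F : MultilinearMap k (fun _ : Fin X.card => V) k :=
      (MultilinearMap.mkPiAlgebra k (Fin X.card) k).compLinearMap f
    have : PiTensorProduct.lift F (PiTensorProduct.tprod k v) = 1 := by
      simp [F, hf1]
    intro hbot
    have hz : (PiTensorProduct.tprod k v : ⨂[k]^X.card V) = 0 := by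
      have : (PiTensorProduct.tprod k v : ⨂[k]^X.card V) ∈
          Submodule.span k {PiTensorProduct.tprod k v} :=
        Submodule.mem_span_singleton_self _
      simpa [hbot] using this
    rw [hz] at this
    simp at this
  · intro s w hw
    obtain ⟨x, hx, hcase⟩ := hX s
    set i : Fin X.card := X.equivFin ⟨x, hx⟩
    have hxi : xs i = x := by simp [xs, i]
    have hkill : ρ s (v i) = 0 := by
      rcases hcase with rfl | ⟨s', rfl⟩
      · rw [← hxi]; exact hvker i
      · rw [map_mul, ← hxi]
        simp [Module.End.mul_apply, hvker i]
    -- reduce to the generator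
    have hgen : ρn s (PiTensorProduct.tprod k v) = 0 := by
      rw [hρn]
      exact MultilinearMap.map_coord_zero _ i hkill
    obtain ⟨c, rfl⟩ := Submodule.mem_span_singleton.mp hw
    rw [map_smul, hgen, smul_zero]
end
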